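/- arXiv:1507.05585 — 13 statements merged into one kernel-verified Lean document; each statement's English description precedes it below -/
import Mathlib

section
/- If (x_n) is Fejér monotone with respect to a nonempty closed convex set C in a real Hilbert space, then the shadow sequence (P_C x_n) converges strongly (in norm) to a point of C, where P_C denotes the metric projection onto C. -/
/-!
The shadows `P xₙ` are Cauchy. For `n ≤ m`, the obtuse-angle characterisation of the projection
at `P xₘ`, together with Fejér monotonicity towards the point `P xₙ ∈ C`, gives
`‖P xₙ - P xₘ‖² ≤ d(xₙ, C)² - d(xₘ, C)²`, and the monotone bounded sequence `d(xₙ, C)²`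
converges.
-/

open Filter Topology
open scoped InnerProductSpace

theorem cauchySeq_of_dist_sq_le_sub {α : Type*} [PseudoMetricSpace α] {s : ℕ → α} {d : ℕ → ℝ}
    (hd : BddBelow (Set.range d)) (h : ∀ n m, n ≤ m → dist (s n) (s m) ^ 2 ≤ d n - d m) :
    CauchySeq s := by
  have hanti : Antitone d := fun n m hnm => by linarith [h n m hnm, sq_nonneg (dist (s n) (s m))]
  have hlim := tendsto_atTop_ciInf hanti hd
  refine cauchySeq_of_le_tendsto_0' (fun n => √(d n - ⨅ k, d k)) (fun n m hnm => ?_) ?_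
  · exact Real.le_sqrt_of_sq_le <| (h n m hnm).trans <| by linarith [ciInf_le hd m]
  · simpa using (hlim.sub_const (⨅ k, d k)).sqrt

section RealInnerProductSpace

variable {F : Type*} [NormedAddCommGroup F] [InnerProductSpace ℝ F]

theorem real_inner_sub_le_zero_of_forall_norm_sub_le {K : Set F} (hK : Convex ℝ K) {u v : F}
    (hv : v ∈ K) (hmin : ∀ w ∈ K, ‖u - v‖ ≤ ‖u - w‖) : ∀ w ∈ K, ⟪u - v, w - v⟫_ℝ ≤ 0 := by
  have : Nonempty K := ⟨⟨v, hv⟩⟩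
  refine (norm_eq_iInf_iff_real_inner_le_zero hK hv).1 (le_antisymm ?_ ?_)
  · exact le_ciInf fun w => hmin w w.2
  · exact ciInf_le ⟨0, Set.forall_mem_range.2 fun _ => norm_nonneg _⟩ (⟨v, hv⟩ : K)

theorem norm_sub_sq_add_norm_sub_sq_le {y a b : F} (h : ⟪y - b, a - b⟫_ℝ ≤ 0) :
    ‖a - b‖ ^ 2 + ‖y - b‖ ^ 2 ≤ ‖y - a‖ ^ 2 := by
  rw [← sub_sub_sub_cancel_right y a b, norm_sub_sq_real (y - b)]
  linarith

end RealInnerProductSpace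

theorem fejer_shadow_converges_general {X : Type*} [NormedAddCommGroup X] [InnerProductSpace ℝ X]
    [CompleteSpace X]
    (C : Set X) (hCcl : IsClosed C) (hCcv : Convex ℝ C)
    (P : X → X) (hP : ∀ z : X, P z ∈ C ∧ ∀ c ∈ C, ‖z - P z‖ ≤ ‖z - c‖)
    (x : ℕ → X) (hFej : ∀ c ∈ C, ∀ n : ℕ, ‖x (n + 1) - c‖ ≤ ‖x n - c‖) :
    ∃ p ∈ C, Tendsto (fun n => P (x n)) atTop (𝓝 p) := by
  have hPC n : P (x n) ∈ C := (hP (x n)).1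
  have hobtuse z : ∀ c ∈ C, ⟪z - P z, c - P z⟫_ℝ ≤ 0 :=
    real_inner_sub_le_zero_of_forall_norm_sub_le hCcv (hP z).1 (hP z).2
  have hstep n m (hnm : n ≤ m) :
      dist (P (x n)) (P (x m)) ^ 2 ≤ ‖x n - P (x n)‖ ^ 2 - ‖x m - P (x m)‖ ^ 2 := by
    have hfej : ‖x m - P (x n)‖ ≤ ‖x n - P (x n)‖ :=
      antitone_nat_of_succ_le (f := fun k => ‖x k - P (x n)‖) (hFej _ (hPC n)) hnm
    have := norm_sub_sq_add_norm_sub_sq_le (hobtuse (x m) _ (hPC n))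
    rw [dist_eq_norm]
    nlinarith [pow_le_pow_left₀ (norm_nonneg _) hfej 2]
  have hcauchy := cauchySeq_of_dist_sq_le_sub ⟨0, fun _ ⟨_, hr⟩ => hr ▸ sq_nonneg _⟩ hstep
  obtain ⟨p, hp⟩ := cauchySeq_tendsto_of_complete hcauchy
  exact ⟨p, hCcl.mem_of_tendsto hp (Eventually.of_forall hPC), hp⟩

theorem fejer_shadow_converges {X : Type*} [NormedAddCommGroup X] [InnerProductSpace ℝ X]
    [CompleteSpace X]
    (C : Set X) (hCne : C.Nonempty) (hCcl : IsClosed C) (hCcv : Convex ℝ C)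
    (P : X → X) (hP : ∀ z : X, P z ∈ C ∧ ∀ c ∈ C, ‖z - P z‖ ≤ ‖z - c‖)
    (x : ℕ → X) (hFej : ∀ c ∈ C, ∀ n : ℕ, ‖x (n + 1) - c‖ ≤ ‖x n - c‖) :
    ∃ p ∈ C, Tendsto (fun n => P (x n)) atTop (𝓝 p) :=
  fejer_shadow_converges_general C hCcl hCcv P hP x hFej
end

section
/- If (x_n) is Fejér monotone with respect to a nonempty closed convex set C with nonempty interior, then (x_n) converges strongly to some point of X. -/
open Filter Topology Metric

/-! If `closedBall z r ⊆ C`, testing Fejér monotonicity at the point `c` of that ball lying in the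
direction of the step `x n - x (n + 1)` shows that each step costs a decrease of at least
`2 r ‖x n - x (n + 1)‖` in `‖x n - z‖ ^ 2`. Hence the step lengths are summable and `(x n)` is
Cauchy. -/

def FejerMonotone {X : Type*} [NormedAddCommGroup X] (C : Set X) (x : ℕ → X) : Prop :=
  ∀ c ∈ C, ∀ n : ℕ, ‖x (n + 1) - c‖ ≤ ‖x n - c‖

section InnerProductSpace

variable {X : Type*} [NormedAddCommGroup X] [InnerProductSpace ℝ X]

theorem two_inner_sub_le_of_norm_sub_le {x y c : X} (z : X) (h : ‖y - c‖ ≤ ‖x - c‖) :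
    2 * inner ℝ (x - y) (c - z) ≤ ‖x - z‖ ^ 2 - ‖y - z‖ ^ 2 := by
  have hsq : ‖y - c‖ ^ 2 ≤ ‖x - c‖ ^ 2 := pow_le_pow_left₀ (norm_nonneg _) h 2
  rw [← sub_sub_sub_cancel_right x c z, ← sub_sub_sub_cancel_right y c z,
    norm_sub_sq_real (x - z), norm_sub_sq_real (y - z)] at hsq
  rw [← sub_sub_sub_cancel_right x y z, inner_sub_left]
  linarith

theorem two_mul_mul_norm_sub_le_of_closedBall_subset {x y z : X} {r : ℝ} (hr : 0 ≤ r)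
    (h : closedBall z r ⊆ {c | ‖y - c‖ ≤ ‖x - c‖}) :
    2 * r * ‖x - y‖ ≤ ‖x - z‖ ^ 2 - ‖y - z‖ ^ 2 := by
  set t := r * ‖x - y‖⁻¹
  have hc : z + t • (x - y) ∈ closedBall z r := by
    rw [mem_closedBall, dist_eq_norm, add_sub_cancel_left, norm_smul,
      Real.norm_of_nonneg (by positivity), mul_assoc]
    exact mul_le_of_le_one_right hr (inv_mul_le_one)
  have key := two_inner_sub_le_of_norm_sub_le z (h hc)
  rwa [add_sub_cancel_left, real_inner_smul_right, real_inner_self_eq_norm_sq, mul_assoc r, sq,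
    ← mul_assoc ‖x - y‖⁻¹, inv_mul_mul_self, ← mul_assoc] at key

variable {C : Set X} {x : ℕ → X} {z : X} {r : ℝ}

theorem FejerMonotone.two_mul_mul_norm_sub_succ_le (hx : FejerMonotone C x) (hr : 0 ≤ r)
    (hC : closedBall z r ⊆ C) (n : ℕ) :
    2 * r * ‖x n - x (n + 1)‖ ≤ ‖x n - z‖ ^ 2 - ‖x (n + 1) - z‖ ^ 2 :=
  two_mul_mul_norm_sub_le_of_closedBall_subset hr fun c hc => hx c (hC hc) n

theorem FejerMonotone.summable_dist_succ (hx : FejerMonotone C x) (hr : 0 < r)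
    (hC : closedBall z r ⊆ C) : Summable fun n => dist (x n) (x (n + 1)) := by
  refine summable_of_sum_range_le (c := ‖x 0 - z‖ ^ 2 / (2 * r)) (fun _ => dist_nonneg)
    fun n => ?_
  rw [le_div_iff₀ (by positivity), Finset.sum_mul]
  calc ∑ i ∈ Finset.range n, dist (x i) (x (i + 1)) * (2 * r)
      ≤ ∑ i ∈ Finset.range n, (‖x i - z‖ ^ 2 - ‖x (i + 1) - z‖ ^ 2) :=
        Finset.sum_le_sum fun i _ => by
          rw [dist_eq_norm]
          linarith [hx.two_mul_mul_norm_sub_succ_le hr.le hC i]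
    _ = ‖x 0 - z‖ ^ 2 - ‖x n - z‖ ^ 2 := Finset.sum_range_sub' _ _
    _ ≤ ‖x 0 - z‖ ^ 2 := sub_le_self _ (sq_nonneg _)

theorem FejerMonotone.cauchySeq (hx : FejerMonotone C x) (hr : 0 < r)
    (hC : closedBall z r ⊆ C) : CauchySeq x :=
  cauchySeq_of_summable_dist (hx.summable_dist_succ hr hC)

end InnerProductSpace

theorem fejer_int_converges_general {X : Type*} [NormedAddCommGroup X] [InnerProductSpace ℝ X]
    [CompleteSpace X]
    (C : Set X)
    (hint : (interior C).Nonempty)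
    (x : ℕ → X) (hFej : ∀ c ∈ C, ∀ n : ℕ, ‖x (n + 1) - c‖ ≤ ‖x n - c‖) :
    ∃ p : X, Tendsto x atTop (𝓝 p) := by
  obtain ⟨z, hz⟩ := hint
  obtain ⟨r, hr, hball⟩ := nhds_basis_closedBall.mem_iff.1 (mem_interior_iff_mem_nhds.1 hz)
  exact cauchySeq_tendsto_of_complete (FejerMonotone.cauchySeq hFej hr hball)

theorem fejer_int_converges {X : Type*} [NormedAddCommGroup X] [InnerProductSpace ℝ X]
    [CompleteSpace X]
    (C : Set X) (hCcl : IsClosed C) (hCcv : Convex ℝ C)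
    (hint : (interior C).Nonempty)
    (x : ℕ → X) (hFej : ∀ c ∈ C, ∀ n : ℕ, ‖x (n + 1) - c‖ ≤ ‖x n - c‖) :
    ∃ p : X, Tendsto x atTop (𝓝 p) :=
  fejer_int_converges_general C hint x hFej
end

section
/- If (x_n) is Fejér monotone with respect to a nonempty closed affine subspace C of a real Hilbert space, then P_C x_n = P_C x_0 for all n, i.e., the projected sequence is constant. -/
/-!
On an affine set `C`, the nearest point `p` of `z` is characterised by `z - p ⟂ c - p` for all
`c ∈ C`. Along a line `p + t (c - p)` in `C`, the difference of the squared distances from two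
points `y` and `z` is affine in `t`; if `y` is never farther than `z` from a point of `C`, it
is bounded above, so its slope `⟪y - z, c - p⟫` vanishes. Hence each Fejér step keeps the
orthogonality characterising `P (x n)`, and `P (x (n + 1)) = P (x n)`.
-/

open scoped RealInnerProductSpace

section InnerProductSpace

variable {X : Type*} [NormedAddCommGroup X] [InnerProductSpace ℝ X]

theorem norm_sub_smul_sq_real (u v : X) (t : ℝ) :
    ‖u - t • v‖ ^ 2 = ‖u‖ ^ 2 - 2 * t * ⟪u, v⟫ + t ^ 2 * ‖v‖ ^ 2 := by
  rw [norm_sub_sq_real, real_inner_smul_right, norm_smul, mul_pow, Real.norm_eq_abs, sq_abs]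
  ring

theorem inner_eq_zero_of_forall_norm_le_norm_sub_smul {u v : X}
    (h : ∀ t : ℝ, ‖u‖ ≤ ‖u - t • v‖) : ⟪u, v⟫ = 0 := by
  have hquad : ∀ t : ℝ, 0 ≤ ‖v‖ ^ 2 * (t * t) + (-2 * ⟪u, v⟫) * t + 0 := fun t => by
    have hsq := pow_le_pow_left₀ (norm_nonneg u) (h t) 2
    rw [norm_sub_smul_sq_real] at hsq
    linarith
  have hdiscrim := discrim_le_zero hquad
  rw [discrim] at hdiscrim
  nlinarith [sq_nonneg ⟪u, v⟫]

theorem inner_eq_of_forall_norm_sub_smul_le {u w v : X}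
    (h : ∀ t : ℝ, ‖u - t • v‖ ≤ ‖w - t • v‖) : ⟪u, v⟫ = ⟪w, v⟫ := by
  have hlin : ∀ t : ℝ, 0 ≤ 0 * (t * t) + 2 * (⟪u, v⟫ - ⟪w, v⟫) * t + (‖w‖ ^ 2 - ‖u‖ ^ 2) :=
    fun t => by
      have hsq := pow_le_pow_left₀ (norm_nonneg _) (h t) 2
      rw [norm_sub_smul_sq_real, norm_sub_smul_sq_real] at hsq
      linarith
  have hdiscrim := discrim_le_zero hlin
  rw [discrim] at hdiscrim
  nlinarith [sq_nonneg (⟪u, v⟫ - ⟪w, v⟫)]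

theorem sub_smul_add_one_sub_smul (z c p : X) (t : ℝ) :
    z - (t • c + (1 - t) • p) = (z - p) - t • (c - p) := by
  rw [smul_sub, sub_smul, one_smul]
  abel

variable {C : Set X} {p z : X}

theorem eq_of_forall_inner_sub_eq_zero (horth : ∀ c ∈ C, ⟪z - p, c - p⟫ = 0) {q : X}
    (hq : q ∈ C) (hle : ‖z - q‖ ≤ ‖z - p‖) : q = p := by
  have hpyth : ‖z - q‖ ^ 2 = ‖z - p‖ ^ 2 + ‖q - p‖ ^ 2 := by
    rw [← sub_sub_sub_cancel_right z q p, norm_sub_sq_real, horth q hq]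
    ring
  have hsq := pow_le_pow_left₀ (norm_nonneg _) hle 2
  have hqp : ‖q - p‖ ^ 2 = 0 := le_antisymm (by linarith) (sq_nonneg _)
  rwa [sq_eq_zero_iff, norm_eq_zero, sub_eq_zero] at hqp

theorem forall_inner_sub_eq_zero_of_forall_norm_le
    (hAff : ∀ a ∈ C, ∀ b ∈ C, ∀ t : ℝ, t • a + (1 - t) • b ∈ C) (hp : p ∈ C)
    (hmin : ∀ c ∈ C, ‖z - p‖ ≤ ‖z - c‖) : ∀ c ∈ C, ⟪z - p, c - p⟫ = 0 :=
  fun c hc => inner_eq_zero_of_forall_norm_le_norm_sub_smul fun t => by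
    simpa only [sub_smul_add_one_sub_smul] using hmin _ (hAff c hc p hp t)

theorem forall_inner_sub_eq_zero_of_fejer
    (hAff : ∀ a ∈ C, ∀ b ∈ C, ∀ t : ℝ, t • a + (1 - t) • b ∈ C) (hp : p ∈ C)
    (horth : ∀ c ∈ C, ⟪z - p, c - p⟫ = 0)
    {y : X} (hfej : ∀ c ∈ C, ‖y - c‖ ≤ ‖z - c‖) : ∀ c ∈ C, ⟪y - p, c - p⟫ = 0 := by
  intro c hc
  rw [← horth c hc]
  exact inner_eq_of_forall_norm_sub_smul_le fun t => by
    simpa only [sub_smul_add_one_sub_smul] using hfej _ (hAff c hc p hp t)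

end InnerProductSpace

theorem fejer_affine_shadow_constant_general {X : Type*} [NormedAddCommGroup X]
    [InnerProductSpace ℝ X]
    (C : Set X)
    (hAff : ∀ a ∈ C, ∀ b ∈ C, ∀ t : ℝ, t • a + (1 - t) • b ∈ C)
    (P : X → X) (hP : ∀ z : X, P z ∈ C ∧ ∀ c ∈ C, ‖z - P z‖ ≤ ‖z - c‖)
    (x : ℕ → X) (hFej : ∀ c ∈ C, ∀ n : ℕ, ‖x (n + 1) - c‖ ≤ ‖x n - c‖) :
    ∀ n : ℕ, P (x n) = P (x 0) := by
  intro n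
  induction n with
  | zero => rfl
  | succ n ih =>
    rw [← ih]
    obtain ⟨hpC, hpmin⟩ := hP (x n)
    have horth := forall_inner_sub_eq_zero_of_forall_norm_le hAff hpC hpmin
    have horth_succ :=
      forall_inner_sub_eq_zero_of_fejer hAff hpC horth fun c hc => hFej c hc n
    exact eq_of_forall_inner_sub_eq_zero horth_succ (hP _).1 ((hP _).2 _ hpC)

theorem fejer_affine_shadow_constant {X : Type*} [NormedAddCommGroup X]
    [InnerProductSpace ℝ X] [CompleteSpace X]
    (C : Set X) (hCne : C.Nonempty) (hCcl : IsClosed C)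
    (hAff : ∀ a ∈ C, ∀ b ∈ C, ∀ t : ℝ, t • a + (1 - t) • b ∈ C)
    (P : X → X) (hP : ∀ z : X, P z ∈ C ∧ ∀ c ∈ C, ‖z - P z‖ ≤ ‖z - c‖)
    (x : ℕ → X) (hFej : ∀ c ∈ C, ∀ n : ℕ, ‖x (n + 1) - c‖ ≤ ‖x n - c‖) :
    ∀ n : ℕ, P (x n) = P (x 0) :=
  fejer_affine_shadow_constant_general C hAff P hP x hFej
end

section
/- Let (x_n) be Fejér monotone with respect to a nonempty closed convex set C in a real Hilbert space, and let w_1, w_2 be weak cluster points of (x_n). Then w_1 − w_2 is orthogonal to C − C, i.e., ⟨w_1 − w_2, c_1 − c_2⟩ = 0 for all c_1, c_2 ∈ C. -/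
open Filter Topology RealInnerProductSpace

theorem fejer_weak_cluster_diff_orth {X : Type*} [NormedAddCommGroup X]
    [InnerProductSpace ℝ X] [CompleteSpace X]
    (C : Set X) (hCne : C.Nonempty) (hCcl : IsClosed C) (hCcv : Convex ℝ C)
    (x : ℕ → X) (hFej : ∀ c ∈ C, ∀ n : ℕ, ‖x (n + 1) - c‖ ≤ ‖x n - c‖)
    (w₁ w₂ : X)
    (hw₁ : ∃ φ : ℕ → ℕ, StrictMono φ ∧
        ∀ u : X, Tendsto (fun n => ⟪x (φ n), u⟫) atTop (𝓝 ⟪w₁, u⟫))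
    (hw₂ : ∃ φ : ℕ → ℕ, StrictMono φ ∧
        ∀ u : X, Tendsto (fun n => ⟪x (φ n), u⟫) atTop (𝓝 ⟪w₂, u⟫)) :
    ∀ c₁ ∈ C, ∀ c₂ ∈ C, ⟪w₁ - w₂, c₁ - c₂⟫ = 0 := by
  obtain ⟨φ₁, hφ₁, hconv₁⟩ := hw₁
  obtain ⟨φ₂, hφ₂, hconv₂⟩ := hw₂
  intro c₁ hc₁ c₂ hc₂
  have key : ∀ c ∈ C, ∃ ℓ : ℝ, Tendsto (fun n => ‖x n - c‖ ^ 2) atTop (𝓝 ℓ) := by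
    intro c hc
    have hanti : Antitone (fun n => ‖x n - c‖) :=
      antitone_nat_of_succ_le (fun n => hFej c hc n)
    have hb : BddBelow (Set.range fun n => ‖x n - c‖) :=
      ⟨0, by rintro _ ⟨n, rfl⟩; positivity⟩
    exact ⟨_, (tendsto_atTop_ciInf hanti hb).pow 2⟩
  obtain ⟨ℓ₁, h1⟩ := key c₁ hc₁
  obtain ⟨ℓ₂, h2⟩ := key c₂ hc₂
  have hf : Tendsto (fun n => ⟪x n, c₁ - c₂⟫)
      atTop (𝓝 ((ℓ₂ - ℓ₁ + ‖c₁‖ ^ 2 - ‖c₂‖ ^ 2) / 2)) := by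
    have heq : (fun n => ⟪x n, c₁ - c₂⟫) =
        fun n => (‖x n - c₂‖ ^ 2 - ‖x n - c₁‖ ^ 2 + ‖c₁‖ ^ 2 - ‖c₂‖ ^ 2) / 2 := by
      funext n
      have e1 : ‖x n - c₁‖ ^ 2 = ‖x n‖ ^ 2 - 2 * ⟪x n, c₁⟫ + ‖c₁‖ ^ 2 :=
        norm_sub_sq_real _ _
      have e2 : ‖x n - c₂‖ ^ 2 = ‖x n‖ ^ 2 - 2 * ⟪x n, c₂⟫ + ‖c₂‖ ^ 2 :=
        norm_sub_sq_real _ _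
      rw [inner_sub_right]
      linarith
    rw [heq]
    exact (((h2.sub h1).add tendsto_const_nhds).sub tendsto_const_nhds).div_const 2
  have L₁ : ⟪w₁, c₁ - c₂⟫ = (ℓ₂ - ℓ₁ + ‖c₁‖ ^ 2 - ‖c₂‖ ^ 2) / 2 :=
    tendsto_nhds_unique (hconv₁ (c₁ - c₂)) (hf.comp hφ₁.tendsto_atTop)
  have L₂ : ⟪w₂, c₁ - c₂⟫ = (ℓ₂ - ℓ₁ + ‖c₁‖ ^ 2 - ‖c₂‖ ^ 2) / 2 :=
    tendsto_nhds_unique (hconv₂ (c₁ - c₂)) (hf.comp hφ₂.tendsto_atTop)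
  rw [inner_sub_left, L₁, L₂, sub_self]
end

section
/- Let X be a finite-dimensional real Hilbert space, (x_n) a sequence Fejér monotone with respect to a nonempty closed convex set C, and A a closed convex set with C ⊆ A. If every cluster point of (P_A x_n) lies in C, then (P_A x_n) converges and lim P_A x_n = lim P_C x_n. -/
open Filter Topology

local notation "⟪" x ", " y "⟫_ℝ" => @inner ℝ _ _ x y

theorem fejer_relaxed_shadow {X : Type*} [NormedAddCommGroup X]
    [InnerProductSpace ℝ X] [FiniteDimensional ℝ X]
    (C A : Set X) (hCne : C.Nonempty) (hCcl : IsClosed C) (hCcv : Convex ℝ C)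
    (hAcl : IsClosed A) (hAcv : Convex ℝ A) (hCA : C ⊆ A)
    (PA PC : X → X)
    (hPA : ∀ z : X, PA z ∈ A ∧ ∀ a ∈ A, ‖z - PA z‖ ≤ ‖z - a‖)
    (hPC : ∀ z : X, PC z ∈ C ∧ ∀ c ∈ C, ‖z - PC z‖ ≤ ‖z - c‖)
    (x : ℕ → X) (hFej : ∀ c ∈ C, ∀ n : ℕ, ‖x (n + 1) - c‖ ≤ ‖x n - c‖)
    (hcluster : ∀ p : X, (∃ φ : ℕ → ℕ, StrictMono φ ∧
        Tendsto (fun n => PA (x (φ n))) atTop (𝓝 p)) → p ∈ C) :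
    ∃ p : X, Tendsto (fun n => PA (x n)) atTop (𝓝 p) ∧
      Tendsto (fun n => PC (x n)) atTop (𝓝 p) := by
  obtain ⟨c₀, hc₀⟩ := hCne
  haveI : Nonempty C := ⟨⟨c₀, hc₀⟩⟩
  -- Fejér descent
  have hdesc : ∀ c ∈ C, ∀ n m : ℕ, n ≤ m → ‖x m - c‖ ≤ ‖x n - c‖ := by
    intro c hc n m h
    have ha : Antitone (fun k => ‖x k - c‖) := antitone_nat_of_succ_le (fun k => hFej c hc k)
    exact ha h
  set d : ℕ → ℝ := fun n => ‖x n - PC (x n)‖ with hd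
  have hdnonneg : ∀ n, 0 ≤ d n := fun n => norm_nonneg _
  have hdle : ∀ n, ∀ c ∈ C, d n ≤ ‖x n - c‖ := fun n c hc => (hPC (x n)).2 c hc
  have hdanti : Antitone d := by
    apply antitone_nat_of_succ_le
    intro n
    calc d (n+1) ≤ ‖x (n+1) - PC (x n)‖ := (hPC (x (n+1))).2 _ (hPC (x n)).1
      _ ≤ ‖x n - PC (x n)‖ := hFej _ (hPC (x n)).1 n
  have hδ : Tendsto d atTop (𝓝 (⨅ n, d n)) :=
    tendsto_atTop_ciInf hdanti ⟨0, by rintro r ⟨n, rfl⟩; exact hdnonneg n⟩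
  set δ : ℝ := ⨅ n, d n with hδdef
  have hδled : ∀ n, δ ≤ d n := fun n => hdanti.le_of_tendsto hδ n
  have hδ0 : 0 ≤ δ := le_ciInf hdnonneg
  -- variational inequality for PC
  have hvar : ∀ u : X, ∀ w ∈ C, ⟪u - PC u, w - PC u⟫_ℝ ≤ 0 := by
    intro u
    have hmin : ‖u - PC u‖ = ⨅ w : C, ‖u - w‖ := by
      refine le_antisymm (le_ciInf fun w => (hPC u).2 w w.2) ?_
      have hbdd : BddBelow (Set.range fun w : C => ‖u - (w : X)‖) :=
        ⟨0, by rintro r ⟨w, rfl⟩; exact norm_nonneg _⟩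
      exact ciInf_le hbdd ⟨PC u, (hPC u).1⟩
    exact (norm_eq_iInf_iff_real_inner_le_zero hCcv (hPC u).1).mp hmin
  -- key Cauchy estimate
  have hkey : ∀ n m : ℕ, n ≤ m → ‖PC (x m) - PC (x n)‖^2 ≤ d n^2 - d m^2 := by
    intro n m h
    have h1 : ⟪x m - PC (x m), PC (x n) - PC (x m)⟫_ℝ ≤ 0 :=
      hvar (x m) _ (hPC (x n)).1
    have h2 : ‖x m - PC (x n)‖ ≤ d n := hdesc _ (hPC (x n)).1 n m h
    have h3 : ‖x m - PC (x n)‖^2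
        = ‖x m - PC (x m)‖^2 + 2*⟪x m - PC (x m), PC (x m) - PC (x n)⟫_ℝ
          + ‖PC (x m) - PC (x n)‖^2 := by
      have e : (x m - PC (x m)) + (PC (x m) - PC (x n)) = x m - PC (x n) := by abel
      have := norm_add_sq_real (x m - PC (x m)) (PC (x m) - PC (x n))
      rw [e] at this
      linarith [this]
    have h4 : 0 ≤ ⟪x m - PC (x m), PC (x m) - PC (x n)⟫_ℝ := by
      have e : PC (x m) - PC (x n) = -(PC (x n) - PC (x m)) := by abel
      rw [e, inner_neg_right]
      linarith
    have h5 : ‖x m - PC (x n)‖^2 ≤ d n^2 := by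
      nlinarith [norm_nonneg (x m - PC (x n)), hdnonneg n]
    have hdm : d m = ‖x m - PC (x m)‖ := rfl
    nlinarith [h3, h4, h5]
  -- (PC (x n)) is Cauchy
  have hb0 : Tendsto (fun N => Real.sqrt (d N^2 - δ^2)) atTop (𝓝 0) := by
    have h1 : Tendsto (fun N => d N^2 - δ^2) atTop (𝓝 0) := by
      have := (hδ.pow 2).sub (tendsto_const_nhds (x := δ^2) (f := atTop))
      simpa using this
    have := h1.sqrt
    simpa using this
  have hcauchy : CauchySeq (fun n => PC (x n)) := by
    apply cauchySeq_of_le_tendsto_0 (fun N => Real.sqrt (d N^2 - δ^2)) _ hb0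
    intro n m N hn hm
    rcases le_total n m with h | h
    · have hkey' := hkey n m h
      have h1 : ‖PC (x m) - PC (x n)‖^2 ≤ d N^2 - δ^2 := by
        have a1 : d n^2 ≤ d N^2 := pow_le_pow_left₀ (hdnonneg n) (hdanti hn) 2
        have a2 : δ^2 ≤ d m^2 := pow_le_pow_left₀ hδ0 (hδled m) 2
        linarith
      rw [dist_eq_norm, ← norm_sub_rev]
      rw [show ‖PC (x m) - PC (x n)‖ = Real.sqrt (‖PC (x m) - PC (x n)‖^2) by
        rw [Real.sqrt_sq (norm_nonneg _)]]
      exact Real.sqrt_le_sqrt h1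
    · have hkey' := hkey m n h
      have h1 : ‖PC (x n) - PC (x m)‖^2 ≤ d N^2 - δ^2 := by
        have a1 : d m^2 ≤ d N^2 := pow_le_pow_left₀ (hdnonneg m) (hdanti hm) 2
        have a2 : δ^2 ≤ d n^2 := pow_le_pow_left₀ hδ0 (hδled n) 2
        linarith
      rw [dist_eq_norm]
      rw [show ‖PC (x n) - PC (x m)‖ = Real.sqrt (‖PC (x n) - PC (x m)‖^2) by
        rw [Real.sqrt_sq (norm_nonneg _)]]
      exact Real.sqrt_le_sqrt h1
  obtain ⟨p, hp⟩ := cauchySeq_tendsto_of_complete hcauchy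
  have hpC : p ∈ C := hCcl.mem_of_tendsto hp (Eventually.of_forall fun n => (hPC (x n)).1)
  -- ‖x n - p‖ → δ
  have hPCp : Tendsto (fun n => ‖PC (x n) - p‖) atTop (𝓝 0) := by
    have := (hp.sub (tendsto_const_nhds (x := p))).norm
    simpa using this
  have hxp : Tendsto (fun n => ‖x n - p‖) atTop (𝓝 δ) := by
    have hup : Tendsto (fun n => d n + ‖PC (x n) - p‖) atTop (𝓝 δ) := by
      simpa using hδ.add hPCp
    refine tendsto_of_tendsto_of_tendsto_of_le_of_le hδ hup ?_ ?_
    · exact fun n => hdle n p hpC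
    · intro n
      calc ‖x n - p‖ = ‖(x n - PC (x n)) + (PC (x n) - p)‖ := by
            congr 1; abel
        _ ≤ d n + ‖PC (x n) - p‖ := norm_add_le _ _
  -- uniqueness of such limits in C
  have huniq : ∀ q ∈ C, Tendsto (fun n => ‖x n - q‖) atTop (𝓝 δ) → q = p := by
    intro q hq hqlim
    set m : X := (1/2 : ℝ) • (q + p) with hm
    have hmC : m ∈ C := by
      have := hCcv hq hpC (by norm_num : (0:ℝ) ≤ 1/2) (by norm_num : (0:ℝ) ≤ 1/2)
        (by norm_num)
      simpa [hm, smul_add] using this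
    have hpar : ∀ n, 4 * ‖x n - m‖^2 + ‖q - p‖^2
        = 2 * ‖x n - q‖^2 + 2 * ‖x n - p‖^2 := by
      intro n
      have e1 : (x n - q) + (x n - p) = (2:ℝ) • (x n - m) := by
        rw [hm]; module
      have e2 : (x n - q) - (x n - p) = p - q := by abel
      have hpl := parallelogram_law_with_norm ℝ (x n - q) (x n - p)
      rw [e1, e2] at hpl
      have e3 : ‖(2:ℝ) • (x n - m)‖ = 2 * ‖x n - m‖ := by
        rw [norm_smul]; simp
      have e4 : ‖p - q‖ = ‖q - p‖ := norm_sub_rev _ _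
      rw [e3, e4] at hpl
      nlinarith [hpl]
    have hineq : ∀ n, 4 * d n^2 + ‖q - p‖^2 ≤ 2 * ‖x n - q‖^2 + 2 * ‖x n - p‖^2 := by
      intro n
      have h1 : d n ≤ ‖x n - m‖ := hdle n m hmC
      nlinarith [hpar n, hdnonneg n, norm_nonneg (x n - m)]
    have hlim : 4 * δ^2 + ‖q - p‖^2 ≤ 2 * δ^2 + 2 * δ^2 := by
      have t1 : Tendsto (fun n => 4 * d n^2 + ‖q - p‖^2) atTop (𝓝 (4 * δ^2 + ‖q - p‖^2)) :=
        (((hδ.pow 2).const_mul 4).add tendsto_const_nhds)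
      have t2 : Tendsto (fun n => 2 * ‖x n - q‖^2 + 2 * ‖x n - p‖^2)
          atTop (𝓝 (2 * δ^2 + 2 * δ^2)) :=
        (((hqlim.pow 2).const_mul 2).add ((hxp.pow 2).const_mul 2))
      exact le_of_tendsto_of_tendsto' t1 t2 hineq
    have : ‖q - p‖ = 0 := by nlinarith [norm_nonneg (q - p)]
    exact sub_eq_zero.mp (norm_eq_zero.mp this)
  -- boundedness of PA (x n)
  have hAle : ∀ n, ‖x n - PA (x n)‖ ≤ d n :=
    fun n => (hPA (x n)).2 _ (hCA (hPC (x n)).1)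
  set R : ℝ := ‖x 0 - c₀‖ + ‖x 0 - c₀‖ + ‖c₀‖ with hR
  have hbound : ∀ n, PA (x n) ∈ Metric.closedBall (0:X) R := by
    intro n
    rw [Metric.mem_closedBall, dist_zero_right]
    have h1 : ‖x n - PA (x n)‖ ≤ ‖x 0 - c₀‖ :=
      le_trans (le_trans (hAle n) (hdle n c₀ hc₀)) (hdesc c₀ hc₀ 0 n (Nat.zero_le n))
    have h2 : ‖x n - c₀‖ ≤ ‖x 0 - c₀‖ := hdesc c₀ hc₀ 0 n (Nat.zero_le n)
    calc ‖PA (x n)‖ = ‖(PA (x n) - x n) + (x n - c₀) + c₀‖ := by congr 1; abel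
      _ ≤ ‖(PA (x n) - x n) + (x n - c₀)‖ + ‖c₀‖ := norm_add_le _ _
      _ ≤ ‖PA (x n) - x n‖ + ‖x n - c₀‖ + ‖c₀‖ := by
          linarith [norm_add_le (PA (x n) - x n) (x n - c₀)]
      _ ≤ R := by rw [norm_sub_rev]; rw [hR]; linarith
  -- main conclusion
  refine ⟨p, ?_, hp⟩
  apply tendsto_of_subseq_tendsto
  intro ns hns
  obtain ⟨ψ, hψ, hnsψ⟩ := strictMono_subseq_of_tendsto_atTop hns
  obtain ⟨q, _, φ, hφ, hqlim⟩ := tendsto_subseq_of_bounded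
    (Metric.isBounded_closedBall (x := (0:X)) (r := R))
    (fun n => hbound (ns (ψ n)))
  have hstrict : StrictMono (fun n => ns (ψ (φ n))) := hnsψ.comp hφ
  have hqC : q ∈ C := hcluster q ⟨fun n => ns (ψ (φ n)), hstrict, hqlim⟩
  -- ‖x n - q‖ → δ
  have hLanti : Antitone (fun n => ‖x n - q‖) :=
    antitone_nat_of_succ_le (fun k => hFej q hqC k)
  have hL : Tendsto (fun n => ‖x n - q‖) atTop (𝓝 (⨅ n, ‖x n - q‖)) :=
    tendsto_atTop_ciInf hLanti ⟨0, by rintro r ⟨n, rfl⟩; exact norm_nonneg _⟩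
  set L : ℝ := ⨅ n, ‖x n - q‖ with hLdef
  have hδL : δ ≤ L :=
    le_of_tendsto_of_tendsto' hδ hL (fun n => hdle n q hqC)
  have hLδ : L ≤ δ := by
    have hsub : Tendsto (fun n => ‖x (ns (ψ (φ n))) - q‖) atTop (𝓝 L) :=
      hL.comp hstrict.tendsto_atTop
    have hdq : Tendsto (fun n => d (ns (ψ (φ n)))) atTop (𝓝 δ) :=
      hδ.comp hstrict.tendsto_atTop
    have hPAq : Tendsto (fun n => ‖PA (x (ns (ψ (φ n)))) - q‖) atTop (𝓝 0) := by
      have := (hqlim.sub (tendsto_const_nhds (x := q))).norm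
      simpa [Function.comp] using this
    have hup : Tendsto (fun n => d (ns (ψ (φ n))) + ‖PA (x (ns (ψ (φ n)))) - q‖)
        atTop (𝓝 δ) := by simpa using hdq.add hPAq
    refine le_of_tendsto_of_tendsto' hsub hup ?_
    intro n
    calc ‖x (ns (ψ (φ n))) - q‖
        = ‖(x (ns (ψ (φ n))) - PA (x (ns (ψ (φ n))))) + (PA (x (ns (ψ (φ n)))) - q)‖ := by
          congr 1; abel
      _ ≤ ‖x (ns (ψ (φ n))) - PA (x (ns (ψ (φ n))))‖ + ‖PA (x (ns (ψ (φ n)))) - q‖ :=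
          norm_add_le _ _
      _ ≤ d (ns (ψ (φ n))) + ‖PA (x (ns (ψ (φ n)))) - q‖ := by
          linarith [hAle (ns (ψ (φ n)))]
  have hqp : q = p := huniq q hqC (by rw [show δ = L from le_antisymm hδL hLδ]; exact hL)
  exact ⟨fun n => ψ (φ n), by rw [← hqp]; exact hqlim⟩
end

section
/- Let (x_n) be a sequence in a real Hilbert space X, E ⊆ X nonempty, and K ⊆ X a nonempty convex cone. Then (x_n) is Fejér monotone with respect to E + K if and only if (x_n) is Fejér monotone with respect to E and x_{n+1} − x_n ∈ K^⊕ for all n, where K^⊕ = {u ∈ X : ⟨u, k⟩ ≥ 0 for all k ∈ K}. -/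
open Filter Topology Pointwise RealInnerProductSpace

private lemma key_real {C a : ℝ} (h : ∀ t : ℝ, 0 < t → C ≤ t * a) : C ≤ 0 ∧ 0 ≤ a := by
  have ha : 0 ≤ a := by
    by_contra hn
    push_neg at hn
    have hna : (0:ℝ) < -a := by linarith
    have ht : (0:ℝ) < (|C| + 1) / (-a) := div_pos (by positivity) hna
    have := h _ ht
    have : (|C| + 1) / (-a) * a = -(|C| + 1) := by
      rw [div_mul_eq_mul_div, mul_div_assoc, div_neg, div_self hn.ne]; ring
    have habs := abs_nonneg C
    have h1 := neg_abs_le C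
    nlinarith [h _ ht]
  constructor
  · rcases eq_or_lt_of_le ha with h0 | hpos
    · have := h 1 one_pos; simpa [← h0] using this
    · by_contra hC
      push_neg at hC
      have ht : (0:ℝ) < C / (2 * a) := by positivity
      have := h _ ht
      have : C / (2 * a) * a = C / 2 := by field_simp
      nlinarith [h _ ht]
  · exact ha

private lemma norm_iff {X : Type*} [NormedAddCommGroup X] [InnerProductSpace ℝ X]
    (a b k : X) : ‖a - k‖ ≤ ‖b - k‖ ↔ ‖a‖^2 - ‖b‖^2 ≤ 2 * ⟪a - b, k⟫ := by
  rw [← pow_le_pow_iff_left₀ (norm_nonneg _) (norm_nonneg _) two_ne_zero,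
    norm_sub_sq_real a k, norm_sub_sq_real b k, inner_sub_left]
  constructor <;> intro <;> linarith

theorem fejer_sum_cone_decoupling {X : Type*} [NormedAddCommGroup X]
    [InnerProductSpace ℝ X]
    (E : Set X) (hEne : E.Nonempty)
    (K : Set X) (hKne : K.Nonempty) (hKcv : Convex ℝ K)
    (hKcone : ∀ ⦃c : ℝ⦄, 0 < c → ∀ ⦃k : X⦄, k ∈ K → c • k ∈ K)
    (x : ℕ → X) :
    (∀ s ∈ E + K, ∀ n : ℕ, ‖x (n + 1) - s‖ ≤ ‖x n - s‖) ↔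
      ((∀ e ∈ E, ∀ n : ℕ, ‖x (n + 1) - e‖ ≤ ‖x n - e‖) ∧
        ∀ n : ℕ, x (n + 1) - x n ∈ {u : X | ∀ k ∈ K, 0 ≤ ⟪u, k⟫}) := by
  have hdiff : ∀ n : ℕ, (x (n+1) - 0) - (x n - 0) = x (n+1) - x n := by intro n; abel
  constructor
  · intro h
    -- main squared inequality, scaled
    have hmain : ∀ e ∈ E, ∀ k ∈ K, ∀ n : ℕ, ∀ t : ℝ, 0 < t →
        ‖x (n+1) - e‖^2 - ‖x n - e‖^2 ≤ t * (2 * ⟪x (n+1) - x n, k⟫) := by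
      intro e he k hk n t ht
      have hs : e + t • k ∈ E + K := Set.add_mem_add he (hKcone ht hk)
      have := h _ hs n
      have h2 : ‖(x (n+1) - e) - t • k‖ ≤ ‖(x n - e) - t • k‖ := by
        have e1 : x (n+1) - (e + t • k) = (x (n+1) - e) - t • k := by abel
        have e2 : x n - (e + t • k) = (x n - e) - t • k := by abel
        rwa [e1, e2] at this
      rw [norm_iff] at h2
      have e3 : (x (n+1) - e) - (x n - e) = x (n+1) - x n := by abel
      rw [e3, real_inner_smul_right] at h2
      linarith
    obtain ⟨e0, he0⟩ := hEne
    obtain ⟨k0, hk0⟩ := hKne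
    constructor
    · intro e he n
      have := (key_real (fun t ht => hmain e he k0 hk0 n t ht)).1
      have h2 : ‖x (n+1) - e‖^2 ≤ ‖x n - e‖^2 := by linarith
      exact (pow_le_pow_iff_left₀ (norm_nonneg _) (norm_nonneg _) two_ne_zero).mp h2
    · intro n k hk
      have := (key_real (fun t ht => hmain e0 he0 k hk n t ht)).2
      linarith
  · rintro ⟨hE, hK⟩ s hs n
    rw [Set.mem_add] at hs
    obtain ⟨e, he, k, hk, rfl⟩ := hs
    have e1 : x (n+1) - (e + k) = (x (n+1) - e) - k := by abel
    have e2 : x n - (e + k) = (x n - e) - k := by abel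
    rw [e1, e2, norm_iff]
    have e3 : (x (n+1) - e) - (x n - e) = x (n+1) - x n := by abel
    rw [e3]
    have h1 := hE e he n
    have h2 : ‖x (n+1) - e‖^2 ≤ ‖x n - e‖^2 :=
      pow_le_pow_left₀ (norm_nonneg _) h1 2
    have h3 := hK n k hk
    linarith
end

section
/- Let (Y, d) be a metric space and (x_n) a sequence contained in a compact subset C of Y with d(x_n, x_{n+1}) → 0. Then the set of cluster points of (x_n) is a nonempty compact connected subset of C. -/
open Filter Topology Metric Uniformity

/-!
If the cluster set splits into two pieces lying in disjoint closed sets `u` and `v`, the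
function `g = infDist · u - infDist · v` is negative on one piece and positive on the other. Since `g` is uniformly continuous, `g (x n)` is a real sequence
with steps tending to `0` that is frequently negative and frequently positive, so it must
frequently come close to `0`; compactness of `C` then produces a cluster point of `x` on which
`g` vanishes, which is impossible.
-/

theorem setOf_exists_strictMono_tendsto_eq_setOf_mapClusterPt {X : Type*} [TopologicalSpace X]
    [FirstCountableTopology X] (x : ℕ → X) :
    {p : X | ∃ φ : ℕ → ℕ, StrictMono φ ∧ Tendsto (x ∘ φ) atTop (𝓝 p)} =
      {p | MapClusterPt p atTop x} :=
  Set.ext fun _ => ⟨fun ⟨_, hφ, h⟩ => h.mapClusterPt.of_comp hφ.tendsto_atTop,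
    MapClusterPt.tendsto_subseq⟩

theorem IsCompact.exists_mapClusterPt_of_mapClusterPt_comp {X Y ι : Type*} [TopologicalSpace X]
    [TopologicalSpace Y] [T2Space Y] {K : Set X} (hK : IsCompact K) {l : Filter ι} {u : ι → X}
    (hu : ∀ᶠ i in l, u i ∈ K) {g : X → Y} (hg : Continuous g) {c : Y}
    (hc : MapClusterPt c l (g ∘ u)) : ∃ p ∈ K, MapClusterPt p l u ∧ g p = c := by
  have : NeBot (l ⊓ comap (g ∘ u) (𝓝 c)) := by
    rw [inf_comm, ← map_neBot_iff (g ∘ u), Filter.push_pull']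
    exact hc
  obtain ⟨p, hpK, hp⟩ := hK.exists_mapClusterPt_of_frequently
    (hu.filter_mono (inf_le_left (b := comap (g ∘ u) (𝓝 c)))).frequently
  refine ⟨p, hpK, hp.mono inf_le_left, eq_of_nhds_neBot ?_⟩
  exact (hp.continuousAt_comp hg.continuousAt).clusterPt.mono
    (tendsto_comap.mono_left inf_le_right)

theorem Real.mapClusterPt_of_frequently_lt_of_frequently_gt {u : ℕ → ℝ}
    (hu : Tendsto (fun n => dist (u n) (u (n + 1))) atTop (𝓝 0)) {c : ℝ}
    (hlt : ∃ᶠ n in atTop, u n < c) (hgt : ∃ᶠ n in atTop, c < u n) : MapClusterPt c atTop u := by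
  rw [nhds_basis_ball.mapClusterPt_iff_frequently]
  intro ε hε
  rw [frequently_atTop]
  intro N
  obtain ⟨N₀, hN₀⟩ := eventually_atTop.1 (hu.eventually (gt_mem_nhds hε))
  obtain ⟨n, hn, hun⟩ := frequently_atTop.1 hlt (max N N₀)
  by_contra! hfar
  -- Steps shorter than `ε` cannot jump over the gap `ball c ε`.
  have hbelow : ∀ k ≥ n, u k < c := by
    intro k hk
    induction k, hk using Nat.le_induction with
    | base => exact hun
    | succ k hk ih =>
      have hstep := hN₀ k (by omega)
      have hkfar := hfar (k + 1) (by omega)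
      rw [Real.dist_eq, abs_lt] at hstep
      rw [mem_ball, Real.dist_eq, not_lt, le_abs] at hkfar
      rcases hkfar with h | h <;> linarith
  obtain ⟨m, hm, hum⟩ := frequently_atTop.1 hgt n
  exact (hbelow m hm).not_gt hum

theorem exists_mapClusterPt_apply_eq_of_lt_of_gt {Y : Type*} [UniformSpace Y] {C : Set Y}
    (hC : IsCompact C) {x : ℕ → Y} (hx : ∀ n, x n ∈ C)
    (hreg : Tendsto (fun n => (x n, x (n + 1))) atTop (𝓤 Y)) {g : Y → ℝ} (hg : UniformContinuous g)
    {p q : Y} (hp : MapClusterPt p atTop x) (hq : MapClusterPt q atTop x) {c : ℝ}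
    (hpc : g p < c) (hcq : c < g q) : ∃ r ∈ C, MapClusterPt r atTop x ∧ g r = c := by
  have hsteps : Tendsto (fun n => dist (g (x n)) (g (x (n + 1)))) atTop (𝓝 0) :=
    tendsto_uniformity_iff_dist_tendsto_zero.1 (Tendsto.comp hg hreg)
  have hlt : ∃ᶠ n in atTop, g (x n) < c :=
    (hp.continuousAt_comp hg.continuous.continuousAt).frequently (Iio_mem_nhds hpc)
  have hgt : ∃ᶠ n in atTop, c < g (x n) :=
    (hq.continuousAt_comp hg.continuous.continuousAt).frequently (Ioi_mem_nhds hcq)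
  exact hC.exists_mapClusterPt_of_mapClusterPt_comp (.of_forall hx) hg.continuous
    (Real.mapClusterPt_of_frequently_lt_of_frequently_gt hsteps hlt hgt)

theorem isPreconnected_setOf_mapClusterPt {Y : Type*} [PseudoMetricSpace Y] {C : Set Y}
    (hC : IsCompact C) {x : ℕ → Y} (hx : ∀ n, x n ∈ C)
    (hreg : Tendsto (fun n => dist (x n) (x (n + 1))) atTop (𝓝 0)) :
    IsPreconnected {p | MapClusterPt p atTop x} := by
  refine (isPreconnected_iff_subset_of_fully_disjoint_closed
    isClosed_setOfPred_clusterPt).2 fun u v hu hv hcover huv => ?_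
  by_contra! hsplit
  obtain ⟨p, hpS, hpu⟩ : ∃ p, MapClusterPt p atTop x ∧ p ∈ u := by
    obtain ⟨p, hpS, hpv⟩ := Set.not_subset.1 hsplit.2
    exact ⟨p, hpS, (hcover hpS).resolve_right hpv⟩
  obtain ⟨q, hqS, hqv⟩ : ∃ q, MapClusterPt q atTop x ∧ q ∈ v := by
    obtain ⟨q, hqS, hqu⟩ := Set.not_subset.1 hsplit.1
    exact ⟨q, hqS, (hcover hqS).resolve_left hqu⟩
  set g : Y → ℝ := fun y => infDist y u - infDist y v
  have hg : UniformContinuous g :=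
    (uniformContinuous_infDist_pt u).sub (uniformContinuous_infDist_pt v)
  have hneg : ∀ y ∈ u, g y < 0 := fun y hy => by
    have := (hv.notMem_iff_infDist_pos ⟨q, hqv⟩).1 (huv.notMem_of_mem_left hy)
    simp only [g, infDist_zero_of_mem hy]
    linarith
  have hpos : ∀ y ∈ v, 0 < g y := fun y hy => by
    have := (hu.notMem_iff_infDist_pos ⟨p, hpu⟩).1 (huv.notMem_of_mem_right hy)
    simp only [g, infDist_zero_of_mem hy]
    linarith
  obtain ⟨r, -, hrS, hr⟩ := exists_mapClusterPt_apply_eq_of_lt_of_gt hC hx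
    (tendsto_uniformity_iff_dist_tendsto_zero.2 hreg) hg hpS hqS (hneg p hpu) (hpos q hqv)
  rcases hcover hrS with hru | hrv
  · exact (hneg r hru).ne hr
  · exact (hpos r hrv).ne' hr

theorem cluster_set_connected_of_asymptotically_regular {Y : Type*} [MetricSpace Y]
    (C : Set Y) (hC : IsCompact C)
    (x : ℕ → Y) (hx : ∀ n, x n ∈ C)
    (hreg : Tendsto (fun n => dist (x n) (x (n + 1))) atTop (𝓝 0)) :
    let S := {p : Y | ∃ φ : ℕ → ℕ, StrictMono φ ∧ Tendsto (x ∘ φ) atTop (𝓝 p)}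
    S.Nonempty ∧ IsCompact S ∧ IsConnected S ∧ S ⊆ C := by
  intro S
  have hS : S = {p | MapClusterPt p atTop x} :=
    setOf_exists_strictMono_tendsto_eq_setOf_mapClusterPt x
  have hsub : S ⊆ C := hS ▸ fun _ hp => hC.isClosed.mem_of_mapClusterPt hp (.of_forall hx)
  have hne : S.Nonempty := by
    obtain ⟨p, -, hp⟩ := hC.exists_mapClusterPt (f := atTop) (tendsto_principal.2 (.of_forall hx))
    exact hS ▸ ⟨p, hp⟩
  have hclosed : IsClosed S := hS ▸ isClosed_setOfPred_clusterPt
  exact ⟨hne, hC.of_isClosed_subset hclosed hsub,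
    ⟨hne, hS ▸ isPreconnected_setOf_mapClusterPt hC hx hreg⟩, hsub⟩
end

section
/- Let X be a finite-dimensional real Hilbert space and C a nonempty closed convex subset of codimension 1 (the linear span of C − C has codimension 1 in X). If (x_n) is Fejér monotone with respect to C and asymptotically regular (x_n − x_{n+1} → 0), then (x_n) converges. -/
open Filter Topology Pointwise
open scoped RealInnerProductSpace

/-- intermediate value for cluster values of a sequence with vanishing steps -/
lemma aux_cluster_between {t : ℕ → ℝ} {m : ℝ}
    (hstep : Tendsto (fun n => t n - t (n + 1)) atTop (𝓝 0))
    (hlt : ∃ᶠ n in atTop, t n < m) (hgt : ∃ᶠ n in atTop, m < t n)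
    {ε : ℝ} (hε : 0 < ε) : ∃ᶠ n in atTop, |t n - m| < ε := by
  rw [frequently_atTop]
  intro N
  have hev : ∀ᶠ n in atTop, |t n - t (n + 1)| < ε := by
    have := hstep.abs
    rw [abs_zero] at this
    exact this.eventually ((tendsto_id.eventually_lt_const hε)) |>.mono (fun n h => h)
  obtain ⟨N₁, hN₁⟩ := eventually_atTop.1 hev
  obtain ⟨i, hi, hti⟩ := (frequently_atTop.1 hlt) (max N N₁)
  obtain ⟨j, hj, htj⟩ := (frequently_atTop.1 hgt) (i + 1)
  have hex : ∃ n, i < n ∧ m ≤ t n := ⟨j, hj, htj.le⟩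
  classical
  set k := Nat.find hex with hk
  obtain ⟨hki, hmk⟩ := Nat.find_spec hex
  have hk1 : k - 1 ≥ i := by omega
  have htk1 : t (k - 1) < m := by
    rcases eq_or_lt_of_le hk1 with h | h
    · rw [← h]; exact hti
    · have := Nat.find_min hex (m := k - 1) (by omega)
      push_neg at this
      exact this h
  refine ⟨k, by omega, ?_⟩
  have hks : k - 1 + 1 = k := by omega
  have hstepk : |t (k - 1) - t (k - 1 + 1)| < ε := hN₁ _ (by omega)
  rw [hks] at hstepk
  rw [abs_lt] at hstepk ⊢
  constructor <;> [linarith; linarith [hmk, htk1]]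

theorem fejer_codim_one_converges {X : Type*} [NormedAddCommGroup X]
    [InnerProductSpace ℝ X] [FiniteDimensional ℝ X]
    (C : Set X) (hCne : C.Nonempty) (hCcl : IsClosed C) (hCcv : Convex ℝ C)
    (hcodim : Module.finrank ℝ (Submodule.span ℝ (C - C)) + 1 = Module.finrank ℝ X)
    (x : ℕ → X) (hFej : ∀ c ∈ C, ∀ n : ℕ, ‖x (n + 1) - c‖ ≤ ‖x n - c‖)
    (hreg : Tendsto (fun n => x n - x (n + 1)) atTop (𝓝 0)) :
    ∃ p : X, Tendsto x atTop (𝓝 p) := by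
  obtain ⟨c0, hc0⟩ := hCne
  -- distances are antitone hence convergent
  have hanti : ∀ c ∈ C, Antitone fun n => ‖x n - c‖ := fun c hc =>
    antitone_nat_of_succ_le (fun n => hFej c hc n)
  have hdlim : ∀ c ∈ C, Tendsto (fun n => ‖x n - c‖) atTop
      (𝓝 (⨅ n, ‖x n - c‖)) := fun c hc =>
    tendsto_atTop_ciInf (hanti c hc) ⟨0, by rintro r ⟨n, rfl⟩; positivity⟩
  -- boundedness
  have hball : ∀ n, x n ∈ Metric.closedBall c0 ‖x 0 - c0‖ := by
    intro n
    rw [Metric.mem_closedBall, dist_eq_norm]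
    exact hanti c0 hc0 (Nat.zero_le n)
  have hcpt : IsCompact (Metric.closedBall c0 ‖x 0 - c0‖) := isCompact_closedBall _ _
  -- cluster points have prescribed distance to every point of C
  set IsCl : X → Prop := fun r => ∃ σ : ℕ → ℕ, Tendsto σ atTop atTop ∧
      Tendsto (fun k => x (σ k)) atTop (𝓝 r) with hIsCl
  have hdist : ∀ r, IsCl r → ∀ c ∈ C, ‖r - c‖ = ⨅ n, ‖x n - c‖ := by
    rintro r ⟨σ, hσ, hσr⟩ c hc
    have h1 : Tendsto (fun k => ‖x (σ k) - c‖) atTop (𝓝 ‖r - c‖) :=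
      (hσr.sub tendsto_const_nhds).norm
    have h2 : Tendsto (fun k => ‖x (σ k) - c‖) atTop (𝓝 (⨅ n, ‖x n - c‖)) :=
      (hdlim c hc).comp hσ
    exact tendsto_nhds_unique h1 h2
  -- differences of cluster points are orthogonal to span (C - C)
  set V := Submodule.span ℝ (C - C) with hV
  have hperp : ∀ r s, IsCl r → IsCl s → r - s ∈ Vᗮ := by
    intro r s hr hs
    rw [Submodule.mem_orthogonal]
    intro u hu
    induction hu using Submodule.span_induction with
    | mem w hw =>
      obtain ⟨c, hc, c', hc', rfl⟩ := hw
      have e1 : ‖r - c‖ ^ 2 = ‖s - c‖ ^ 2 := by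
        rw [hdist r hr c hc, hdist s hs c hc]
      have e2 : ‖r - c'‖ ^ 2 = ‖s - c'‖ ^ 2 := by
        rw [hdist r hr c' hc', hdist s hs c' hc']
      rw [norm_sub_sq_real, norm_sub_sq_real] at e1 e2
      rw [inner_sub_left, inner_sub_right, inner_sub_right]
      have c1 := real_inner_comm r c
      have c2 := real_inner_comm s c
      have c3 := real_inner_comm r c'
      have c4 := real_inner_comm s c'
      linarith
    | zero => simp
    | add w₁ w₂ _ _ h1 h2 => rw [inner_add_left, h1, h2]; ring
    | smul a w _ h => rw [real_inner_smul_left, h]; ring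
  -- uniqueness of cluster points
  have huniq : ∀ p q, IsCl p → IsCl q → p = q := by
    intro p q hp hq
    by_contra hpq
    have hw0 : q - p ≠ 0 := sub_ne_zero.2 (Ne.symm hpq)
    set w := q - p with hw
    have hwV : w ∈ Vᗮ := hperp q p hq hp
    -- Vᗮ is one-dimensional, spanned by w
    have hrank : Module.finrank ℝ Vᗮ = 1 := by
      have := Submodule.finrank_add_finrank_orthogonal V
      omega
    have hspan : Submodule.span ℝ {w} = Vᗮ := by
      apply Submodule.eq_of_le_of_finrank_le
      · rw [Submodule.span_le, Set.singleton_subset_iff]; exact hwV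
      · rw [hrank, finrank_span_singleton hw0]
    set e := ‖w‖⁻¹ • w with he
    have hwpos : (0:ℝ) < ‖w‖ := norm_pos_iff.2 hw0
    have hew : ⟪e, w⟫ = ‖w‖ := by
      rw [he, real_inner_smul_left, real_inner_self_eq_norm_sq]
      field_simp
    set t : ℕ → ℝ := fun n => ⟪e, x n⟫ with ht
    set a : ℝ := ⟪e, p⟫ with ha
    set b : ℝ := ⟪e, q⟫ with hb
    have hba : b - a = ‖w‖ := by
      rw [ha, hb, ← inner_sub_right]; exact hew
    set m : ℝ := (a + b) / 2 with hm
    have ham : a < m := by rw [hm]; nlinarith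
    have hmb : m < b := by rw [hm]; nlinarith
    -- steps of t vanish
    have hstep : Tendsto (fun n => t n - t (n + 1)) atTop (𝓝 0) := by
      have : Tendsto (fun n => ⟪e, x n - x (n + 1)⟫) atTop (𝓝 ⟪e, (0:X)⟫) :=
        Filter.Tendsto.inner tendsto_const_nhds hreg
      simpa [inner_sub_right] using this
    -- a and b are cluster values of t
    obtain ⟨σp, hσp, hσpp⟩ := id hp
    obtain ⟨σq, hσq, hσqq⟩ := id hq
    have hta : Tendsto (fun k => t (σp k)) atTop (𝓝 a) :=
      Filter.Tendsto.inner tendsto_const_nhds hσpp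
    have htb : Tendsto (fun k => t (σq k)) atTop (𝓝 b) :=
      Filter.Tendsto.inner tendsto_const_nhds hσqq
    have hlt : ∃ᶠ n in atTop, t n < m :=
      hσp.frequently ((hta.eventually_lt_const ham).frequently)
    have hgt : ∃ᶠ n in atTop, m < t n :=
      hσq.frequently ((htb.eventually_const_lt hmb).frequently)
    -- extract a cluster point u with ⟪e, u⟫ = m
    have hfreq : ∀ n : ℕ, ∃ᶠ k in atTop, |t k - m| < 1 / (n + 1) :=
      fun n => aux_cluster_between hstep hlt hgt (by positivity)
    obtain ⟨ψ, hψ, hψm⟩ := Filter.extraction_forall_of_frequently hfreq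
    obtain ⟨u, -, ρ, hρ, hρu⟩ := hcpt.tendsto_subseq (fun k => hball (ψ k))
    have hu : IsCl u := ⟨ψ ∘ ρ, (hψ.tendsto_atTop).comp hρ.tendsto_atTop, hρu⟩
    have hum : ⟪e, u⟫ = m := by
      have h1 : Tendsto (fun k => t (ψ (ρ k))) atTop (𝓝 ⟪e, u⟫) :=
        Filter.Tendsto.inner tendsto_const_nhds hρu
      have h2 : Tendsto (fun k => t (ψ (ρ k))) atTop (𝓝 m) := by
        rw [tendsto_iff_dist_tendsto_zero]
        apply squeeze_zero (fun k => dist_nonneg) (g := fun k : ℕ => 1 / (k + 1 : ℝ))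
        · intro k
          have := hψm (ρ k)
          have hkk : k ≤ ρ k := hρ.le_apply
          have hk : (k : ℝ) + 1 ≤ (ρ k : ℝ) + 1 := by
            have := (Nat.cast_le (α := ℝ)).2 hkk; linarith
          calc dist (t (ψ (ρ k))) m = |t (ψ (ρ k)) - m| := Real.dist_eq _ _
            _ ≤ 1 / (ρ k + 1) := (hψm (ρ k)).le
            _ ≤ 1 / (k + 1) := one_div_le_one_div_of_le (by positivity) hk
        · exact tendsto_one_div_add_atTop_nhds_zero_nat
      exact tendsto_nhds_unique h1 h2
    -- u lies on the line p + ℝ w, at parameter 1/2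
    have hup : u - p ∈ Submodule.span ℝ {w} := hspan ▸ hperp u p hu hp
    obtain ⟨s, hs⟩ := Submodule.mem_span_singleton.1 hup
    have hs2 : s = 1 / 2 := by
      have : ⟪e, u - p⟫ = s * ‖w‖ := by
        rw [← hs, real_inner_smul_right, hew]
      rw [inner_sub_right, hum, ← ha] at this
      have : m - a = s * ‖w‖ := this
      rw [hm] at this
      have hba' : b - a = ‖w‖ := hba
      nlinarith
    -- the quadratic contradiction at c0
    have hq' : q - c0 = (p - c0) + w := by rw [hw]; abel
    have hu' : u - c0 = (p - c0) + (1/2 : ℝ) • w := by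
      rw [← hs2, hs]; abel
    have dpq : ‖(p - c0) + w‖ = ‖p - c0‖ := by
      rw [← hq', hdist q hq c0 hc0, hdist p hp c0 hc0]
    have dpu : ‖(p - c0) + (1/2 : ℝ) • w‖ = ‖p - c0‖ := by
      rw [← hu', hdist u hu c0 hc0, hdist p hp c0 hc0]
    have n1 : ‖(p - c0) + w‖ ^ 2 = ‖p - c0‖ ^ 2 := by rw [dpq]
    have n2 : ‖(p - c0) + (1/2 : ℝ) • w‖ ^ 2 = ‖p - c0‖ ^ 2 := by rw [dpu]
    rw [norm_add_sq_real] at n1 n2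
    rw [real_inner_smul_right] at n2
    have hns : ‖(1/2 : ℝ) • w‖ = (1/2 : ℝ) * ‖w‖ := by
      rw [norm_smul]; simp
    rw [hns] at n2
    nlinarith [hwpos]
  -- conclude
  obtain ⟨p, -, φ, hφ, hφp⟩ := hcpt.tendsto_subseq hball
  have hpCl : IsCl p := ⟨φ, hφ.tendsto_atTop, hφp⟩
  refine ⟨p, tendsto_of_subseq_tendsto fun ns hns => ?_⟩
  obtain ⟨q, -, ms, hms, hmsq⟩ := hcpt.tendsto_subseq (fun k => hball (ns k))
  have hqCl : IsCl q := ⟨ns ∘ ms, hns.comp hms.tendsto_atTop, hmsq⟩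
  exact ⟨ms, (huniq p q hpCl hqCl) ▸ hmsq⟩
end

section
/- In X = ℝ², let θ_n = Σ_{k=1}^n 1/k and x_n = (cos θ_n, sin θ_n). Then (x_n) is asymptotically regular (x_n − x_{n+1} → 0) and Fejér monotone with respect to {(0,0)}, but the set of cluster points of (x_n) equals the whole unit circle. -/
/-! The points `x n` lie on the unit circle, so Fejér monotonicity with respect to the origin is
trivial and every cluster point lies on the circle. Since `t ↦ (cos t, sin t)` is 1-Lipschitz,
`‖x n - x (n + 1)‖ ≤ 1 / (n + 1)`. Conversely, the harmonic sums `θ n` diverge with steps tending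
to `0`, so for every `α` they come arbitrarily close to `α + 2πk` for infinitely many `n`, which
makes `(cos α, sin α)` a cluster point. -/

open Filter Topology Function Set

theorem mapClusterPt_atTop_iff_exists_strictMono {X : Type*} [TopologicalSpace X]
    [FirstCountableTopology X] {u : ℕ → X} {p : X} :
    MapClusterPt p atTop u ↔ ∃ φ : ℕ → ℕ, StrictMono φ ∧ Tendsto (u ∘ φ) atTop (𝓝 p) :=
  ⟨MapClusterPt.tendsto_subseq, fun ⟨_, hφ, h⟩ => h.mapClusterPt.of_comp hφ.tendsto_atTop⟩

theorem exists_ge_abs_sub_lt_of_tendsto_atTop {u : ℕ → ℝ} (hu : Tendsto u atTop atTop)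
    {δ : ℝ} {N : ℕ} (hstep : ∀ n ≥ N, u (n + 1) - u n < δ) {t : ℝ} (ht : u N ≤ t) :
    ∃ n ≥ N, |u n - t| < δ := by
  classical
  have hexceeds : ∃ m, t < u (m + N) :=
    ((tendsto_add_atTop_iff_nat N).2 hu |>.eventually_gt_atTop t).exists
  -- `k + N` is the last index before `u` first exceeds `t`
  obtain ⟨k, hk⟩ : ∃ k, Nat.find hexceeds = k + 1 :=
    Nat.exists_eq_succ_of_ne_zero fun h => absurd (Nat.find_spec hexceeds) (by simpa [h] using ht)
  have hbelow : u (k + N) ≤ t := not_lt.1 (Nat.find_min hexceeds (by omega))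
  have habove : t < u (k + N + 1) := by simpa [hk, add_right_comm] using Nat.find_spec hexceeds
  refine ⟨k + N, by omega, ?_⟩
  rw [abs_sub_comm, abs_of_nonneg (sub_nonneg.2 hbelow)]
  linarith [hstep (k + N) (by omega)]

theorem Function.Periodic.mapClusterPt_comp {X : Type*} [TopologicalSpace X] {f : ℝ → X}
    {T : ℝ} (hf : Periodic f T) (hT : 0 < T) {α : ℝ} (hfα : ContinuousAt f α) {u : ℕ → ℝ}
    (hu : Tendsto u atTop atTop) (hdu : Tendsto (fun n => u (n + 1) - u n) atTop (𝓝 0)) :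
    MapClusterPt (f α) atTop (f ∘ u) := by
  rw [mapClusterPt_iff_frequently]
  intro s hs
  obtain ⟨δ, hδ, hball⟩ := Metric.mem_nhds_iff.1 (hfα hs)
  rw [frequently_atTop]
  intro N
  obtain ⟨N', hN'⟩ := eventually_atTop.1 (hdu.eventually (gt_mem_nhds hδ))
  -- from `max N N'` on, `u` passes within `δ` of the translate `α + k * T` lying above it
  obtain ⟨k, hk⟩ := Archimedean.arch (u (max N N') - α) hT
  rw [nsmul_eq_mul] at hk
  obtain ⟨n, hn, hnear⟩ := exists_ge_abs_sub_lt_of_tendsto_atTop hu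
    (fun n hn => hN' n (le_of_max_le_right hn)) (t := α + k * T) (by linarith)
  refine ⟨n, le_of_max_le_left hn, ?_⟩
  rw [comp_apply, ← hf.sub_nat_mul_eq k]
  exact hball (by rw [Metric.mem_ball, Real.dist_eq]; convert hnear using 2; ring)

theorem Function.Periodic.setOf_mapClusterPt_comp_eq_range {X : Type*} [TopologicalSpace X]
    [T2Space X] {f : ℝ → X} {T : ℝ} (hf : Periodic f T) (hT : 0 < T) (hfc : Continuous f)
    {u : ℕ → ℝ} (hu : Tendsto u atTop atTop)
    (hdu : Tendsto (fun n => u (n + 1) - u n) atTop (𝓝 0)) :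
    {p | MapClusterPt p atTop (f ∘ u)} = range f := by
  refine Subset.antisymm (fun p hp => ?_) ?_
  · exact (hf.compact_of_continuous hT.ne' hfc).isClosed.mem_of_mapClusterPt hp
      (Eventually.of_forall fun n => mem_range_self (u n))
  · rintro _ ⟨α, rfl⟩
    exact hf.mapClusterPt_comp hT hfc.continuousAt hu hdu

noncomputable def circlePoint (t : ℝ) : EuclideanSpace ℝ (Fin 2) :=
  WithLp.toLp 2 ![Real.cos t, Real.sin t]

theorem orthonormalBasisOneI_repr_exp_mul_I (t : ℝ) :
    Complex.orthonormalBasisOneI.repr (Complex.exp (t * Complex.I)) = circlePoint t := by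
  ext i
  fin_cases i <;> simp [circlePoint, Complex.exp_ofReal_mul_I_re, Complex.exp_ofReal_mul_I_im]

theorem norm_circlePoint (t : ℝ) : ‖circlePoint t‖ = 1 := by
  rw [← orthonormalBasisOneI_repr_exp_mul_I, LinearIsometryEquiv.norm_map,
    Complex.norm_exp_ofReal_mul_I]

theorem dist_circlePoint_le (a b : ℝ) : dist (circlePoint a) (circlePoint b) ≤ dist a b := by
  rw [← orthonormalBasisOneI_repr_exp_mul_I, ← orthonormalBasisOneI_repr_exp_mul_I,
    LinearIsometryEquiv.dist_map, dist_eq_norm, Real.dist_eq, ← Real.norm_eq_abs]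
  calc ‖Complex.exp (a * Complex.I) - Complex.exp (b * Complex.I)‖
      = ‖Complex.exp (b * Complex.I)‖ * ‖Complex.exp (Complex.I * ↑(a - b)) - 1‖ := by
        rw [← norm_mul, mul_sub, ← Complex.exp_add, mul_one]; push_cast; ring_nf
    _ ≤ ‖a - b‖ := by
        rw [Complex.norm_exp_ofReal_mul_I, one_mul]; exact Real.norm_exp_I_mul_ofReal_sub_one_le

theorem continuous_circlePoint : Continuous circlePoint := by
  unfold circlePoint; fun_prop

theorem periodic_circlePoint : Periodic circlePoint (2 * Real.pi) := by
  intro t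
  simp [circlePoint]

theorem range_circlePoint : range circlePoint = Metric.sphere 0 1 := by
  ext p
  rw [mem_sphere_zero_iff_norm, ← Complex.orthonormalBasisOneI.repr.symm.norm_map,
    Complex.norm_eq_one_iff]
  simp only [mem_range, ← orthonormalBasisOneI_repr_exp_mul_I, LinearIsometryEquiv.eq_symm_apply]

theorem fejer_cluster_circle_example :
    let θ : ℕ → ℝ := fun n => ∑ k ∈ Finset.range n, (1 : ℝ) / (k + 1)
    let x : ℕ → EuclideanSpace ℝ (Fin 2) := fun n => WithLp.toLp 2 ![Real.cos (θ n), Real.sin (θ n)]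
    (Tendsto (fun n => x n - x (n + 1)) atTop (𝓝 0)) ∧
      (∀ c ∈ ({0} : Set (EuclideanSpace ℝ (Fin 2))), ∀ n : ℕ,
        ‖x (n + 1) - c‖ ≤ ‖x n - c‖) ∧
      {p : EuclideanSpace ℝ (Fin 2) |
          ∃ φ : ℕ → ℕ, StrictMono φ ∧ Tendsto (x ∘ φ) atTop (𝓝 p)} =
        {p : EuclideanSpace ℝ (Fin 2) | ‖p‖ = 1} := by
  intro θ x
  have hx : x = circlePoint ∘ θ := rfl
  have hθ_top : Tendsto θ atTop atTop := Real.tendsto_sum_range_one_div_nat_succ_atTop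
  have hθ_step : Tendsto (fun n => θ (n + 1) - θ n) atTop (𝓝 0) := by
    simpa [θ, Finset.sum_range_succ] using tendsto_one_div_add_atTop_nhds_zero_nat (𝕜 := ℝ)
  refine ⟨?_, ?_, ?_⟩
  · refine tendsto_zero_iff_norm_tendsto_zero.2 (squeeze_zero (fun _ => norm_nonneg _)
      (fun n => ?_) (by simpa using hθ_step.abs))
    rw [← dist_eq_norm, dist_comm, hx, ← Real.dist_eq]
    exact dist_circlePoint_le _ _
  · rintro c rfl n
    simp [hx, norm_circlePoint]
  · simp only [hx, ← mapClusterPt_atTop_iff_exists_strictMono,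
      periodic_circlePoint.setOf_mapClusterPt_comp_eq_range Real.two_pi_pos
        continuous_circlePoint hθ_top hθ_step, range_circlePoint]
    ext p
    exact mem_sphere_zero_iff_norm
end

section
/- Let T : X → X be a nonexpansive map on a real Hilbert space with Fix(T) ≠ ∅, and let x ∈ X. Then the sequence (T^n x) converges weakly if and only if T^n x − T^{n+1} x ⇀ 0 (weakly); in that case the weak limit of (T^n x) is a fixed point of T. -/
open Filter Topology RealInnerProductSpace

section Aux

variable {X : Type*} [NormedAddCommGroup X] [InnerProductSpace ℝ X]

private lemma aux_anti (T : X → X) (hT : ∀ a b : X, ‖T a - T b‖ ≤ ‖a - b‖)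
    {p : X} (hp : T p = p) (x : X) (n : ℕ) :
    ‖T^[n + 1] x - p‖ ≤ ‖T^[n] x - p‖ := by
  rw [Function.iterate_succ_apply']
  calc ‖T (T^[n] x) - p‖ = ‖T (T^[n] x) - T p‖ := by rw [hp]
  _ ≤ ‖T^[n] x - p‖ := hT _ _

private lemma aux_normsq_conv (T : X → X) (hT : ∀ a b : X, ‖T a - T b‖ ≤ ‖a - b‖)
    {p : X} (hp : T p = p) (x : X) :
    ∃ L : ℝ, Tendsto (fun n => ‖T^[n] x - p‖ ^ 2) atTop (𝓝 L) := by
  have hanti : Antitone (fun n => ‖T^[n] x - p‖ ^ 2) := by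
    apply antitone_nat_of_succ_le
    intro n
    have h := aux_anti T hT hp x n
    nlinarith [norm_nonneg (T^[n + 1] x - p), norm_nonneg (T^[n] x - p)]
  exact ⟨_, tendsto_atTop_ciInf hanti ⟨0, by rintro r ⟨n, rfl⟩; positivity⟩⟩

/-- Demiclosedness-type lemma: a weak limit point (along a filter `l ≤ atTop`) of the
iterates is a fixed point, provided the differences tend weakly to zero. -/
private lemma aux_demiclosed (T : X → X) (hT : ∀ a b : X, ‖T a - T b‖ ≤ ‖a - b‖)
    {z : X} (hz : T z = z) (x : X)
    (hd : ∀ u : X, Tendsto (fun n => ⟪T^[n] x - T^[n + 1] x, u⟫) atTop (𝓝 0))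
    {l : Filter ℕ} [l.NeBot] (hl : l ≤ atTop) {w : X}
    (hw : ∀ u : X, Tendsto (fun n => ⟪T^[n] x, u⟫) l (𝓝 ⟪w, u⟫)) :
    T w = w := by
  obtain ⟨L, hL⟩ := aux_normsq_conv T hT hz x
  -- the consecutive differences of ‖yₙ - w‖² tend to 0 along atTop
  have hA : Tendsto (fun n => ‖T^[n] x - w‖ ^ 2 - ‖T^[n + 1] x - w‖ ^ 2) atTop (𝓝 0) := by
    have h1 : Tendsto (fun n => ‖T^[n] x - z‖ ^ 2 - ‖T^[n + 1] x - z‖ ^ 2) atTop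
        (𝓝 (L - L)) := hL.sub (hL.comp (tendsto_add_atTop_nat 1))
    have h2 : Tendsto (fun n => 2 * ⟪T^[n] x - T^[n + 1] x, z - w⟫) atTop (𝓝 (2 * 0)) :=
      (hd (z - w)).const_mul 2
    have h3 := h1.add h2
    have h4 : (L - L) + 2 * 0 = 0 := by ring
    rw [h4] at h3
    refine h3.congr fun n => ?_
    have e1 : T^[n] x - w = (T^[n] x - z) + (z - w) := by abel
    have e2 : T^[n + 1] x - w = (T^[n + 1] x - z) + (z - w) := by abel
    rw [e1, e2, norm_add_sq_real, norm_add_sq_real]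
    simp only [inner_sub_left]
    ring
  -- along l, ⟪y (n+1) - w, w - T w⟫ → 0
  have hB : Tendsto (fun n => ⟪T^[n + 1] x - w, w - T w⟫) l (𝓝 0) := by
    have h4 : Tendsto (fun n =>
        ⟪T^[n] x, w - T w⟫ - ⟪T^[n] x - T^[n + 1] x, w - T w⟫ - ⟪w, w - T w⟫) l
        (𝓝 (⟪w, w - T w⟫ - 0 - ⟪w, w - T w⟫)) :=
      ((hw _).sub ((hd _).mono_left hl)).sub tendsto_const_nhds
    have h5 : ⟪w, w - T w⟫ - 0 - ⟪w, w - T w⟫ = (0 : ℝ) := by ring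
    rw [h5] at h4
    refine h4.congr fun n => ?_
    simp only [inner_sub_left]
    ring
  -- combine
  have hElim : Tendsto (fun n => (‖T^[n] x - w‖ ^ 2 - ‖T^[n + 1] x - w‖ ^ 2)
      - 2 * ⟪T^[n + 1] x - w, w - T w⟫ - ‖w - T w‖ ^ 2) l
      (𝓝 (0 - 2 * 0 - ‖w - T w‖ ^ 2)) :=
    ((hA.mono_left hl).sub (hB.const_mul 2)).sub tendsto_const_nhds
  have key : ∀ n, (0 : ℝ) ≤ (‖T^[n] x - w‖ ^ 2 - ‖T^[n + 1] x - w‖ ^ 2)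
      - 2 * ⟪T^[n + 1] x - w, w - T w⟫ - ‖w - T w‖ ^ 2 := by
    intro n
    have h5 : ‖T^[n + 1] x - T w‖ ≤ ‖T^[n] x - w‖ := by
      rw [Function.iterate_succ_apply']; exact hT _ _
    have h6 : ‖T^[n + 1] x - T w‖ ^ 2 ≤ ‖T^[n] x - w‖ ^ 2 := by
      nlinarith [norm_nonneg (T^[n + 1] x - T w), norm_nonneg (T^[n] x - w)]
    have h7 : T^[n + 1] x - T w = (T^[n + 1] x - w) + (w - T w) := by abel
    rw [h7, norm_add_sq_real] at h6
    linarith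
  have hge : (0 : ℝ) ≤ 0 - 2 * 0 - ‖w - T w‖ ^ 2 :=
    ge_of_tendsto hElim (Eventually.of_forall key)
  have : ‖w - T w‖ ^ 2 ≤ 0 := by linarith
  have h8 : w - T w = 0 := by
    have h9 : ‖w - T w‖ = 0 := by nlinarith [norm_nonneg (w - T w)]
    exact norm_eq_zero.mp h9
  rw [sub_eq_zero] at h8
  exact h8.symm

/-- Two weak limit points of the iterates along filters finer than `atTop`, both of which
are fixed points, coincide. -/
private lemma aux_uniq (T : X → X) (hT : ∀ a b : X, ‖T a - T b‖ ≤ ‖a - b‖) (x : X)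
    {l₁ l₂ : Filter ℕ} [l₁.NeBot] [l₂.NeBot] (h₁ : l₁ ≤ atTop) (h₂ : l₂ ≤ atTop)
    {w₁ w₂ : X}
    (hw₁ : ∀ u : X, Tendsto (fun n => ⟪T^[n] x, u⟫) l₁ (𝓝 ⟪w₁, u⟫))
    (hw₂ : ∀ u : X, Tendsto (fun n => ⟪T^[n] x, u⟫) l₂ (𝓝 ⟪w₂, u⟫))
    (hf₁ : T w₁ = w₁) (hf₂ : T w₂ = w₂) : w₁ = w₂ := by
  obtain ⟨L₁, hL₁⟩ := aux_normsq_conv T hT hf₁ x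
  obtain ⟨L₂, hL₂⟩ := aux_normsq_conv T hT hf₂ x
  -- ⟪yₙ, w₁ - w₂⟫ converges along atTop
  have hG : Tendsto (fun n => ⟪T^[n] x, w₁ - w₂⟫) atTop
      (𝓝 ((L₂ - L₁ + ‖w₁‖ ^ 2 - ‖w₂‖ ^ 2) / 2)) := by
    have h3 := ((hL₂.sub hL₁).add_const (‖w₁‖ ^ 2 - ‖w₂‖ ^ 2)).div_const 2
    have h4 : L₂ - L₁ + (‖w₁‖ ^ 2 - ‖w₂‖ ^ 2) = L₂ - L₁ + ‖w₁‖ ^ 2 - ‖w₂‖ ^ 2 := by ring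
    rw [h4] at h3
    refine h3.congr fun n => ?_
    rw [norm_sub_sq_real, norm_sub_sq_real, inner_sub_right]
    ring
  have e₁ : ⟪w₁, w₁ - w₂⟫ = (L₂ - L₁ + ‖w₁‖ ^ 2 - ‖w₂‖ ^ 2) / 2 :=
    tendsto_nhds_unique (hw₁ _) (hG.mono_left h₁)
  have e₂ : ⟪w₂, w₁ - w₂⟫ = (L₂ - L₁ + ‖w₁‖ ^ 2 - ‖w₂‖ ^ 2) / 2 :=
    tendsto_nhds_unique (hw₂ _) (hG.mono_left h₂)
  have : ⟪w₁ - w₂, w₁ - w₂⟫ = (0 : ℝ) := by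
    rw [inner_sub_left, e₁, e₂]; ring
  rw [inner_self_eq_zero, sub_eq_zero] at this
  exact this

/-- Existence of a weak limit, given weak convergence of the differences to zero. -/
private lemma aux_exists [CompleteSpace X]
    (T : X → X) (hT : ∀ a b : X, ‖T a - T b‖ ≤ ‖a - b‖)
    {z : X} (hz : T z = z) (x : X)
    (hd : ∀ u : X, Tendsto (fun n => ⟪T^[n] x - T^[n + 1] x, u⟫) atTop (𝓝 0)) :
    ∃ w : X, T w = w ∧ ∀ u : X, Tendsto (fun n => ⟪T^[n] x, u⟫) atTop (𝓝 ⟪w, u⟫) := by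
  -- the orbit is bounded
  have hbd : ∀ n, ‖T^[n] x - z‖ ≤ ‖x - z‖ := by
    intro n
    induction n with
    | zero => simp
    | succ n ih => exact (aux_anti T hT hz x n).trans ih
  set R : ℝ := ‖x - z‖ + ‖z‖ with hR
  have hbd' : ∀ n, ‖T^[n] x‖ ≤ R := by
    intro n
    calc ‖T^[n] x‖ = ‖(T^[n] x - z) + z‖ := by rw [sub_add_cancel]
    _ ≤ ‖T^[n] x - z‖ + ‖z‖ := norm_add_le _ _
    _ ≤ ‖x - z‖ + ‖z‖ := by linarith [hbd n]
  -- the corresponding sequence in the weak dual lies in a weak-star compact ball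
  set g : ℕ → WeakDual ℝ X := fun n => (InnerProductSpace.toDual ℝ X (T^[n] x) : X →L[ℝ] ℝ)
    with hg
  set K : Set (WeakDual ℝ X) := WeakDual.toStrongDual ⁻¹' Metric.closedBall (0 : StrongDual ℝ X) R with hK
  have hKcompact : IsCompact K := WeakDual.isCompact_closedBall (𝕜 := ℝ) (0 : StrongDual ℝ X) R
  have hgK : ∀ n, g n ∈ K := by
    intro n
    simp only [hK, Set.mem_preimage, Metric.mem_closedBall, dist_zero_right]
    calc ‖WeakDual.toStrongDual (g n)‖
        = ‖InnerProductSpace.toDual ℝ X (T^[n] x)‖ := rfl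
    _ = ‖T^[n] x‖ := by rw [LinearIsometryEquiv.norm_map]
    _ ≤ R := hbd' n
  -- along every ultrafilter finer than atTop, we get a weak limit which is a fixed point
  have main : ∀ U : Ultrafilter ℕ, (U : Filter ℕ) ≤ atTop →
      ∃ w : X, T w = w ∧ ∀ u : X, Tendsto (fun n => ⟪T^[n] x, u⟫) U (𝓝 ⟪w, u⟫) := by
    intro U hU
    have hle : (U.map g : Filter (WeakDual ℝ X)) ≤ 𝓟 K := by
      rw [Filter.le_principal_iff]
      exact Filter.mem_map.mpr (Filter.univ_mem' hgK)
    obtain ⟨φ, -, hφ⟩ := hKcompact.ultrafilter_le_nhds (U.map g) hle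
    set w : X := (InnerProductSpace.toDual ℝ X).symm φ with hw
    have hconv : ∀ u : X, Tendsto (fun n => ⟪T^[n] x, u⟫) U (𝓝 ⟪w, u⟫) := by
      intro u
      have hev : Tendsto (fun n => (g n) u) U (𝓝 (φ u)) :=
        ((WeakDual.eval_continuous u).continuousAt.tendsto).comp hφ
      have h1 : ∀ n, (g n) u = ⟪T^[n] x, u⟫ := fun n => InnerProductSpace.toDual_apply_apply
      have h2 : φ u = ⟪w, u⟫ := (InnerProductSpace.toDual_symm_apply).symm
      rw [← h2]
      exact hev.congr h1
    exact ⟨w, aux_demiclosed T hT hz x hd hU hconv, hconv⟩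
  -- fix one ultrafilter to define the limit
  obtain ⟨U₀, hU₀⟩ := Filter.exists_ultrafilter_le (atTop : Filter ℕ)
  obtain ⟨w₀, hfix₀, hconv₀⟩ := main U₀ hU₀
  refine ⟨w₀, hfix₀, fun u => ?_⟩
  rw [tendsto_iff_ultrafilter]
  intro U hU
  obtain ⟨w, hfix, hconv⟩ := main U hU
  have : w = w₀ := aux_uniq T hT x hU hU₀ hconv hconv₀ hfix hfix₀
  rw [← this]
  exact hconv u

end Aux

theorem iterate_weak_conv_iff {X : Type*} [NormedAddCommGroup X]
    [InnerProductSpace ℝ X] [CompleteSpace X]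
    (T : X → X) (hT : ∀ a b : X, ‖T a - T b‖ ≤ ‖a - b‖)
    (hFix : ∃ z : X, T z = z) (x : X) :
    ((∃ w : X, ∀ u : X,
        Tendsto (fun n => ⟪T^[n] x, u⟫) atTop (𝓝 ⟪w, u⟫)) ↔
      (∀ u : X, Tendsto (fun n => ⟪T^[n] x - T^[n + 1] x, u⟫) atTop (𝓝 0))) ∧
    (∀ w : X, (∀ u : X, Tendsto (fun n => ⟪T^[n] x, u⟫) atTop (𝓝 ⟪w, u⟫)) →
      T w = w) := by
  obtain ⟨z, hz⟩ := hFix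
  have fwd : (∃ w : X, ∀ u : X, Tendsto (fun n => ⟪T^[n] x, u⟫) atTop (𝓝 ⟪w, u⟫)) →
      ∀ u : X, Tendsto (fun n => ⟪T^[n] x - T^[n + 1] x, u⟫) atTop (𝓝 0) := by
    rintro ⟨w, hw⟩ u
    have h1 := hw u
    have h2 : Tendsto (fun n => ⟪T^[n + 1] x, u⟫) atTop (𝓝 ⟪w, u⟫) :=
      h1.comp (tendsto_add_atTop_nat 1)
    have h3 := h1.sub h2
    rw [sub_self] at h3
    refine h3.congr fun n => ?_
    rw [inner_sub_left]
  refine ⟨⟨fwd, fun hd => ?_⟩, fun w hw => aux_demiclosed T hT hz x (fwd ⟨w, hw⟩) le_rfl hw⟩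
  obtain ⟨w, -, hconv⟩ := aux_exists T hT hz x hd
  exact ⟨w, hconv⟩
end

section
/- Let T : X → X be α-averaged for some α ∈ (0,1) (i.e., ‖Tx − Ty‖² + ((1−α)/α)‖(x − Tx) − (y − Ty)‖² ≤ ‖x − y‖² for all x, y), and suppose Fix(v+T) ≠ ∅ where v ∈ X and T^n y = y − nv for y ∈ Fix(v+T). Then for every x ∈ X, T^n x − T^{n+1} x → v in norm; equivalently (T^n x + n v) is asymptotically regular. -/
open Filter Topology

theorem averaged_generalized_asymptotic_regularity {X : Type*} [NormedAddCommGroup X]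
    [InnerProductSpace ℝ X] [CompleteSpace X]
    (T : X → X) (α : ℝ) (hα : 0 < α ∧ α < 1)
    (hav : ∀ a b : X, ‖T a - T b‖ ^ 2 +
        ((1 - α) / α) * ‖(a - T a) - (b - T b)‖ ^ 2 ≤ ‖a - b‖ ^ 2)
    (v : X) (hne : ∃ z : X, z = v + T z)
    (hIter : ∀ y : X, y = v + T y → ∀ n : ℕ, T^[n] y = y - (n : ℝ) • v) :
    ∀ x : X, Tendsto (fun n => T^[n] x - T^[n + 1] x) atTop (𝓝 v) := by
  obtain ⟨z, hz⟩ := hne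
  have hz' := hIter z hz
  intro x
  set c : ℝ := (1 - α) / α with hc
  have hcpos : 0 < c := div_pos (by linarith [hα.2]) hα.1
  set d : ℕ → ℝ := fun n => ‖T^[n] x - T^[n] z‖ ^ 2 with hd
  have key : ∀ n, d (n + 1) + c * ‖(T^[n] x - T^[n + 1] x) - v‖ ^ 2 ≤ d n := by
    intro n
    have hb : T^[n] z - T^[n + 1] z = v := by
      rw [hz' n, hz' (n + 1)]
      push_cast
      module
    have h := hav (T^[n] x) (T^[n] z)
    rw [← Function.iterate_succ_apply' T n x, ← Function.iterate_succ_apply' T n z] at h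
    rw [hb] at h
    exact h
  have hd_anti : Antitone d := antitone_nat_of_succ_le fun n =>
    le_trans (le_add_of_nonneg_right (mul_nonneg hcpos.le (sq_nonneg _))) (key n)
  have hbdd : BddBelow (Set.range d) := ⟨0, by rintro _ ⟨n, rfl⟩; positivity⟩
  have hconv : Tendsto d atTop (𝓝 (⨅ n, d n)) := tendsto_atTop_ciInf hd_anti hbdd
  have hdiff : Tendsto (fun n => d n - d (n + 1)) atTop (𝓝 0) := by
    have := hconv.sub (hconv.comp (tendsto_add_atTop_nat 1))
    simpa using this
  have hsq : Tendsto (fun n => ‖(T^[n] x - T^[n + 1] x) - v‖ ^ 2) atTop (𝓝 0) := by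
    refine squeeze_zero (fun n => sq_nonneg _) (fun n => ?_) (by simpa using hdiff.div_const c)
    rw [le_div_iff₀ hcpos]
    nlinarith [key n]
  have hn : Tendsto (fun n => ‖(T^[n] x - T^[n + 1] x) - v‖) atTop (𝓝 0) := by
    have h2 := (Real.continuous_sqrt.tendsto 0).comp hsq
    simpa [Function.comp_def, Real.sqrt_sq (norm_nonneg _)] using h2
  rw [tendsto_iff_norm_sub_tendsto_zero]
  exact hn
end

section
/- Let T : ℝ → ℝ be α-averaged for some α ∈ (0,1). Then for all x, y ∈ ℝ, the sequence (T^n x − T^n y) converges. -/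
open Filter Topology

theorem averaged_real_iterates_difference_converges
    (T : ℝ → ℝ) (α : ℝ) (hα : 0 < α ∧ α < 1)
    (hav : ∀ a b : ℝ, |T a - T b| ^ 2 +
        ((1 - α) / α) * |(a - T a) - (b - T b)| ^ 2 ≤ |a - b| ^ 2) :
    ∀ x y : ℝ, ∃ L : ℝ, Tendsto (fun n => T^[n] x - T^[n] y) atTop (𝓝 L) := by
  obtain ⟨hα0, hα1⟩ := hα
  intro x y
  obtain ⟨u, hu⟩ : ∃ u : ℕ → ℝ, u = fun n => T^[n] x - T^[n] y := ⟨_, rfl⟩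
  obtain ⟨c, hcdef⟩ : ∃ c : ℝ, c = (1 - α) / α := ⟨_, rfl⟩
  rw [← hcdef] at hav
  have hc : 0 < c := hcdef ▸ div_pos (by linarith) hα0
  have key : ∀ n, (u (n + 1)) ^ 2 + c * (u n - u (n + 1)) ^ 2 ≤ (u n) ^ 2 := by
    intro n
    have h := hav (T^[n] x) (T^[n] y)
    have e1 : T (T^[n] x) = T^[(n+1)] x := (Function.iterate_succ_apply' T n x).symm
    have e2 : T (T^[n] y) = T^[(n+1)] y := (Function.iterate_succ_apply' T n y).symm
    rw [e1, e2] at h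
    have r1 : |T^[n+1] x - T^[n+1] y| ^ 2 = (u (n+1)) ^ 2 := by rw [sq_abs, hu]
    have r2 : |(T^[n] x - T^[n+1] x) - (T^[n] y - T^[n+1] y)| ^ 2
        = (u n - u (n+1)) ^ 2 := by rw [sq_abs, hu]; ring_nf
    have r3 : |T^[n] x - T^[n] y| ^ 2 = (u n) ^ 2 := by rw [sq_abs, hu]
    rw [r1, r2, r3] at h
    exact h
  have mono : ∀ n, |u (n + 1)| ≤ |u n| := by
    intro n
    have h := key n
    have h2 : 0 ≤ c * (u n - u (n + 1)) ^ 2 := by positivity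
    nlinarith [abs_nonneg (u (n+1)), abs_nonneg (u n), sq_abs (u n), sq_abs (u (n+1))]
  have hanti : Antitone (fun n => |u n|) := antitone_nat_of_succ_le mono
  have hbdd : BddBelow (Set.range fun n => |u n|) :=
    ⟨0, by rintro _ ⟨n, rfl⟩; exact abs_nonneg _⟩
  obtain ⟨L, hL⟩ : ∃ L : ℝ, Tendsto (fun n => |u n|) atTop (𝓝 L) :=
    ⟨_, tendsto_atTop_ciInf hanti hbdd⟩
  have hL0 : 0 ≤ L := ge_of_tendsto' hL fun n => abs_nonneg _
  have hsq : Tendsto (fun n => (u n) ^ 2) atTop (𝓝 (L ^ 2)) := by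
    have := hL.pow 2
    simpa [sq_abs] using this
  have hsq' : Tendsto (fun n => (u (n + 1)) ^ 2) atTop (𝓝 (L ^ 2)) :=
    hsq.comp (tendsto_add_atTop_nat 1)
  have hgap : Tendsto (fun n => (u n) ^ 2 - (u (n + 1)) ^ 2) atTop (𝓝 0) := by
    have := hsq.sub hsq'
    simpa using this
  have hdsq : Tendsto (fun n => (u n - u (n + 1)) ^ 2) atTop (𝓝 0) := by
    have hle : ∀ n, (u n - u (n + 1)) ^ 2 ≤ (1 / c) * ((u n) ^ 2 - (u (n + 1)) ^ 2) := by
      intro n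
      have h := key n
      have h1 : c * (u n - u (n + 1)) ^ 2 ≤ (u n) ^ 2 - (u (n + 1)) ^ 2 := by linarith
      calc (u n - u (n + 1)) ^ 2 = (1 / c) * (c * (u n - u (n + 1)) ^ 2) := by
            field_simp
        _ ≤ (1 / c) * ((u n) ^ 2 - (u (n + 1)) ^ 2) :=
            mul_le_mul_of_nonneg_left h1 (by positivity)
    have hub : Tendsto (fun n => (1 / c) * ((u n) ^ 2 - (u (n + 1)) ^ 2)) atTop (𝓝 0) := by
      have := hgap.const_mul (1 / c)
      simpa using this
    exact squeeze_zero (fun n => sq_nonneg _) hle hub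
  have hdabs : Tendsto (fun n => |u n - u (n + 1)|) atTop (𝓝 0) := by
    have h := (Real.continuous_sqrt.tendsto 0).comp hdsq
    simp only [Function.comp_def, Real.sqrt_sq_eq_abs, Real.sqrt_zero] at h
    exact h
  rcases eq_or_lt_of_le hL0 with hLz | hLpos
  · refine ⟨0, ?_⟩
    rw [hu] at hL
    rw [← hLz] at hL
    exact tendsto_zero_iff_abs_tendsto_zero _ |>.mpr hL
  · have h1 : ∀ᶠ n in atTop, L / 2 < |u n| := hL.eventually_const_lt (by linarith)
    have h2 : ∀ᶠ n in atTop, |u n - u (n + 1)| < L / 2 :=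
      hdabs.eventually_lt_const (by linarith)
    obtain ⟨N, hN⟩ := (h1.and h2).exists_forall_of_atTop
    have huN : u N ≠ 0 := by
      have h := (hN N le_rfl).1
      intro h'; rw [h'] at h; simp at h; linarith
    rcases huN.lt_or_gt with hneg | hpos
    · have hsign : ∀ n, N ≤ n → u n < -(L / 2) := by
        intro n hn
        induction n, hn using Nat.le_induction with
        | base =>
          have h := (hN N le_rfl).1
          rw [abs_of_neg hneg] at h; linarith
        | succ n hn ih =>
          have hd := abs_lt.mp (hN n hn).2
          have hb := (hN (n + 1) (by omega)).1
          have hneg1 : u (n + 1) < 0 := by linarith [hd.1]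
          rw [abs_of_neg hneg1] at hb; linarith
      refine ⟨-L, ?_⟩
      have heq : (fun n => -|u n|) =ᶠ[atTop] u := by
        filter_upwards [eventually_ge_atTop N] with n hn
        have h := hsign n hn
        rw [abs_of_neg (by linarith : u n < 0)]; ring
      have h := Tendsto.congr' heq hL.neg
      rwa [hu] at h
    · have hsign : ∀ n, N ≤ n → L / 2 < u n := by
        intro n hn
        induction n, hn using Nat.le_induction with
        | base =>
          have h := (hN N le_rfl).1
          rw [abs_of_pos hpos] at h; linarith
        | succ n hn ih =>
          have hd := abs_lt.mp (hN n hn).2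
          have hb := (hN (n + 1) (by omega)).1
          have hpos1 : 0 < u (n + 1) := by linarith [hd.2]
          rw [abs_of_pos hpos1] at hb; linarith
      refine ⟨L, ?_⟩
      have heq : (fun n => |u n|) =ᶠ[atTop] u := by
        filter_upwards [eventually_ge_atTop N] with n hn
        exact abs_of_pos (by linarith [hsign n hn])
      have h := Tendsto.congr' heq hL
      rwa [hu] at h
end

section
/- Let X be a finite-dimensional real Hilbert space, T : X → X α-averaged for some α ∈ (0,1), v ∈ X with Fix(v+T) ≠ ∅, T^n y = y − nv for y ∈ Fix(v+T), and suppose the codimension of span(Fix(v+T) − Fix(v+T)) is at most 1. Then for every x ∈ X, the sequence (T^n x + n v) converges, and consequently for all x, y ∈ X the sequence (T^n x − T^n y) converges. -/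
open Filter Topology Pointwise

open RealInnerProductSpace in
private theorem real_sq_tendsto_converges_aux (t : ℕ → ℝ) (s : ℝ)
    (hs : Tendsto (fun n => t n ^ 2) atTop (𝓝 s))
    (hd : Tendsto (fun n => t (n + 1) - t n) atTop (𝓝 0)) :
    ∃ L : ℝ, Tendsto t atTop (𝓝 L) := by
  have hs0 : 0 ≤ s := le_of_tendsto_of_tendsto' tendsto_const_nhds hs (fun n => sq_nonneg _)
  rcases eq_or_lt_of_le hs0 with h0 | hpos
  · -- s = 0, t → 0
    refine ⟨0, ?_⟩
    have habs : Tendsto (fun n => |t n|) atTop (𝓝 0) := by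
      have h1 := (Real.continuous_sqrt.tendsto s).comp hs
      rw [← h0] at h1
      simpa [Function.comp_def, Real.sqrt_sq_eq_abs] using h1
    exact tendsto_zero_iff_abs_tendsto_zero _ |>.2 habs
  · set c := Real.sqrt (s / 2) with hc
    have hc0 : 0 < c := Real.sqrt_pos.2 (by linarith)
    have hev1 : ∀ᶠ n in atTop, s / 2 < t n ^ 2 :=
      hs.eventually (eventually_gt_nhds (by linarith))
    have hev2 : ∀ᶠ n in atTop, |t (n + 1) - t n| < c := by
      have := hd.eventually (eventually_abs_sub_lt 0 hc0)
      simpa using this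
    obtain ⟨N, hN⟩ := (hev1.and hev2).exists_forall_of_atTop
    have habs : ∀ n, N ≤ n → c < |t n| := by
      intro n hn
      have h1 := (hN n hn).1
      have h2 : c ^ 2 < |t n| ^ 2 := by
        rw [sq_abs]
        calc c ^ 2 = s / 2 := Real.sq_sqrt (by linarith)
        _ < t n ^ 2 := h1
      exact lt_of_pow_lt_pow_left₀ 2 (abs_nonneg _) h2
    have hsqrt : Tendsto (fun n => Real.sqrt (t n ^ 2)) atTop (𝓝 (Real.sqrt s)) :=
      (Real.continuous_sqrt.tendsto s).comp hs
    rcases le_or_gt (t N) 0 with hneg | hposN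
    · -- all t n < -c for n ≥ N
      have hall : ∀ k, t (N + k) < -c := by
        intro k
        induction k with
        | zero =>
          have h3 := habs N le_rfl
          rw [abs_of_nonpos hneg] at h3
          simpa using (by linarith : t N < -c)
        | succ k ih =>
          have h2 := (hN (N + k) (by omega)).2
          have h3 := habs (N + k + 1) (by omega)
          rcases abs_lt.1 h2 with ⟨hl, hr⟩
          have hneg' : t (N + k + 1) < 0 := by linarith
          rw [abs_of_nonpos hneg'.le] at h3
          exact (by linarith : t (N + k + 1) < -c)
      refine ⟨-Real.sqrt s, ?_⟩
      refine hsqrt.neg.congr' ?_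
      filter_upwards [eventually_ge_atTop N] with n hn
      have hlt : t n < -c := by
        obtain ⟨k, rfl⟩ := Nat.exists_eq_add_of_le hn
        exact hall k
      rw [Real.sqrt_sq_eq_abs, abs_of_neg (by linarith), neg_neg]
    · -- all t n > c for n ≥ N
      have hall : ∀ k, c < t (N + k) := by
        intro k
        induction k with
        | zero =>
          have h3 := habs N le_rfl
          rw [abs_of_pos hposN] at h3
          simpa using h3
        | succ k ih =>
          have h2 := (hN (N + k) (by omega)).2
          have h3 := habs (N + k + 1) (by omega)
          rcases abs_lt.1 h2 with ⟨hl, hr⟩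
          have hpos' : 0 < t (N + k + 1) := by linarith
          rw [abs_of_pos hpos'] at h3
          exact h3
      refine ⟨Real.sqrt s, ?_⟩
      refine hsqrt.congr' ?_
      filter_upwards [eventually_ge_atTop N] with n hn
      have hlt : c < t n := by
        obtain ⟨k, rfl⟩ := Nat.exists_eq_add_of_le hn
        exact hall k
      rw [Real.sqrt_sq_eq_abs, abs_of_pos (by linarith)]

open RealInnerProductSpace in
theorem averaged_codim_le_one_converges {X : Type*} [NormedAddCommGroup X]
    [InnerProductSpace ℝ X] [FiniteDimensional ℝ X]
    (T : X → X) (α : ℝ) (hα : 0 < α ∧ α < 1)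
    (hav : ∀ a b : X, ‖T a - T b‖ ^ 2 +
        ((1 - α) / α) * ‖(a - T a) - (b - T b)‖ ^ 2 ≤ ‖a - b‖ ^ 2)
    (v : X) (hne : ∃ z : X, z = v + T z)
    (hIter : ∀ y : X, y = v + T y → ∀ n : ℕ, T^[n] y = y - (n : ℝ) • v)
    (hcodim : Module.finrank ℝ X ≤
      Module.finrank ℝ (Submodule.span ℝ
        ({z : X | z = v + T z} - {z : X | z = v + T z})) + 1) :
    (∀ x : X, ∃ p : X, Tendsto (fun n => T^[n] x + (n : ℝ) • v) atTop (𝓝 p)) ∧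
      (∀ x y : X, ∃ L : X, Tendsto (fun n => T^[n] x - T^[n] y) atTop (𝓝 L)) := by
  obtain ⟨hα0, hα1⟩ := hα
  obtain ⟨z, hz⟩ := hne
  set C : Set X := {z : X | z = v + T z} with hCdef
  set V : Submodule ℝ X := Submodule.span ℝ (C - C) with hVdef
  have hzC : z ∈ C := hz
  have hK0 : 0 < (1 - α) / α := div_pos (by linarith) hα0
  have key : ∀ x : X, ∃ p : X, Tendsto (fun n => T^[n] x + (n : ℝ) • v) atTop (𝓝 p) := by
    intro x
    set u : ℕ → X := fun n => T^[n] x + (n : ℝ) • v with hu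
    -- Fejér-type inequality
    have fej : ∀ c ∈ C, ∀ n : ℕ,
        ‖u (n + 1) - c‖ ^ 2 + ((1 - α) / α) * ‖u n - u (n + 1)‖ ^ 2 ≤ ‖u n - c‖ ^ 2 := by
      intro c hc n
      have hc' : c = v + T c := hc
      have H := hav (T^[n] x) (T^[n] c)
      have h1 : T^[n] x - T^[n] c = u n - c := by
        rw [hIter c hc' n]
        simp only [hu]
        abel
      have h2 : T (T^[n] x) - T (T^[n] c) = u (n + 1) - c := by
        rw [← Function.iterate_succ_apply' T n x, ← Function.iterate_succ_apply' T n c,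
          hIter c hc' (n + 1)]
        simp only [hu]
        abel
      have h3 : (T^[n] x - T (T^[n] x)) - (T^[n] c - T (T^[n] c)) = u n - u (n + 1) := by
        rw [← Function.iterate_succ_apply' T n x, ← Function.iterate_succ_apply' T n c,
          hIter c hc' n, hIter c hc' (n + 1)]
        simp only [hu]
        abel
      rw [h1, h2, h3] at H
      exact H
    have hmono : ∀ c ∈ C, Antitone fun n => ‖u n - c‖ ^ 2 := by
      intro c hc
      refine antitone_nat_of_succ_le fun n => ?_
      have h := fej c hc n
      nlinarith [mul_nonneg hK0.le (sq_nonneg ‖u n - u (n + 1)‖)]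
    have dconv : ∀ c ∈ C, ∃ l : ℝ, Tendsto (fun n => ‖u n - c‖ ^ 2) atTop (𝓝 l) := by
      intro c hc
      refine ⟨_, tendsto_atTop_ciInf (hmono c hc) ⟨0, ?_⟩⟩
      rintro y ⟨n, rfl⟩
      positivity
    obtain ⟨l, hl⟩ := dconv z hzC
    -- successive differences tend to zero
    have hl' : Tendsto (fun n => ‖u (n + 1) - z‖ ^ 2) atTop (𝓝 l) :=
      hl.comp (tendsto_add_atTop_nat 1)
    have hdd : Tendsto (fun n => ‖u n - z‖ ^ 2 - ‖u (n + 1) - z‖ ^ 2) atTop (𝓝 0) := by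
      simpa using hl.sub hl'
    have hsq0 : Tendsto (fun n => ‖u n - u (n + 1)‖ ^ 2) atTop (𝓝 0) := by
      have hub : ∀ n, ‖u n - u (n + 1)‖ ^ 2 ≤
          ((1 - α) / α)⁻¹ * (‖u n - z‖ ^ 2 - ‖u (n + 1) - z‖ ^ 2) := by
        intro n
        have h := fej z hzC n
        calc ‖u n - u (n + 1)‖ ^ 2
            = ((1 - α) / α)⁻¹ * (((1 - α) / α) * ‖u n - u (n + 1)‖ ^ 2) :=
              (inv_mul_cancel_left₀ hK0.ne' _).symm
          _ ≤ ((1 - α) / α)⁻¹ * (‖u n - z‖ ^ 2 - ‖u (n + 1) - z‖ ^ 2) := by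
              apply mul_le_mul_of_nonneg_left _ (inv_nonneg.2 hK0.le)
              linarith
      refine squeeze_zero (fun n => by positivity) hub ?_
      simpa using hdd.const_mul ((1 - α) / α)⁻¹
    have ddiff : Tendsto (fun n => u (n + 1) - u n) atTop (𝓝 0) := by
      rw [tendsto_zero_iff_norm_tendsto_zero]
      have h2 := (Real.continuous_sqrt.tendsto 0).comp hsq0
      rw [Real.sqrt_zero] at h2
      refine h2.congr fun n => ?_
      simp only [Function.comp_apply]
      rw [Real.sqrt_sq (norm_nonneg _), norm_sub_rev]
    -- inner products with span of C - C converge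
    have hVS : ∀ y ∈ V, ∃ L : ℝ, Tendsto (fun n => ⟪y, u n - z⟫) atTop (𝓝 L) := by
      let S : Submodule ℝ X :=
        { carrier := {y : X | ∃ L : ℝ, Tendsto (fun n => ⟪y, u n - z⟫) atTop (𝓝 L)}
          add_mem' := by
            rintro a b ⟨La, ha⟩ ⟨Lb, hb⟩
            exact ⟨La + Lb, by simpa [inner_add_left] using ha.add hb⟩
          zero_mem' := ⟨0, by simp⟩
          smul_mem' := by
            rintro c a ⟨La, ha⟩
            exact ⟨c * La, by simpa [real_inner_smul_left] using ha.const_mul c⟩ }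
      intro y hy
      have hle : V ≤ S := by
        rw [hVdef]
        refine Submodule.span_le.2 ?_
        rintro y hy
        rw [Set.mem_sub] at hy
        obtain ⟨c1, hc1, c2, hc2, rfl⟩ := hy
        obtain ⟨l1, h1⟩ := dconv c1 hc1
        obtain ⟨l2, h2⟩ := dconv c2 hc2
        refine ⟨(l2 - l1 + (‖c1‖ ^ 2 - ‖c2‖ ^ 2)) / 2 - ⟪c1 - c2, z⟫, ?_⟩
        have hT := (((h2.sub h1).add_const (‖c1‖ ^ 2 - ‖c2‖ ^ 2)).div_const 2).sub_const
          ⟪c1 - c2, z⟫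
        refine hT.congr fun n => ?_
        rw [norm_sub_sq_real, norm_sub_sq_real]
        simp only [inner_sub_left, inner_sub_right]
        rw [real_inner_comm c1 (u n), real_inner_comm c2 (u n)]
        ring
      exact hle hy
    -- orthonormal basis of V and projection sequence
    set bV := stdOrthonormalBasis ℝ V with hbV
    have hcoord : ∀ i, ∃ L : ℝ, Tendsto (fun n => ⟪(bV i : X), u n - z⟫) atTop (𝓝 L) :=
      fun i => hVS _ (bV i).2
    choose Lc hLc using hcoord
    set p : ℕ → X := fun n => ∑ i, ⟪(bV i : X), u n - z⟫ • (bV i : X) with hp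
    have hP : Tendsto p atTop (𝓝 (∑ i, Lc i • (bV i : X))) := by
      refine tendsto_finset_sum _ fun i _ => ?_
      exact (hLc i).smul_const _
    set P : X := ∑ i, Lc i • (bV i : X) with hPdef
    have hpV : ∀ n, p n ∈ V := fun n =>
      Submodule.sum_mem _ fun i _ => Submodule.smul_mem _ _ (bV i).2
    have hip : ∀ (j) (n : ℕ), ⟪(bV j : X), u n - z - p n⟫ = 0 := by
      intro j n
      rw [inner_sub_right]
      have hpn : ⟪(bV j : X), p n⟫ = ⟪(bV j : X), u n - z⟫ := by
        simp only [hp, inner_sum, real_inner_smul_right]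
        have horth := orthonormal_iff_ite.mp bV.orthonormal
        have : ∀ i, ⟪(bV j : X), (bV i : X)⟫ = if j = i then (1 : ℝ) else 0 := by
          intro i
          rw [← Submodule.coe_inner]
          exact horth j i
        simp [this]
      rw [hpn, sub_self]
    have horthV : ∀ n, u n - z - p n ∈ Vᗮ := by
      intro n
      rw [Submodule.mem_orthogonal]
      intro y hy
      have h0 := bV.sum_repr' (⟨y, hy⟩ : V)
      have hyx : (∑ i, ⟪bV i, (⟨y, hy⟩ : V)⟫ • (bV i : X)) = y := by
        have := congrArg (fun w : V => (w : X)) h0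
        simpa using this
      rw [← hyx, sum_inner]
      refine Finset.sum_eq_zero fun i _ => ?_
      rw [real_inner_smul_left, hip i n, mul_zero]
    -- the orthogonal complement has dimension at most 1
    have hrksum := Submodule.finrank_add_finrank_orthogonal (K := V)
    have hrk1 : Module.finrank ℝ Vᗮ ≤ 1 := by omega
    obtain ⟨e, heV, hee⟩ : ∃ e : X, Vᗮ = (ℝ ∙ e) ∧ (e = 0 ∨ ‖e‖ = 1) := by
      by_cases hbot : Vᗮ = ⊥
      · exact ⟨0, by rw [hbot, Submodule.span_zero_singleton], Or.inl rfl⟩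
      · obtain ⟨e0, he0V, he0⟩ := Submodule.exists_mem_ne_zero_of_ne_bot hbot
        have hnn : ‖(‖e0‖⁻¹ • e0 : X)‖ = 1 := norm_smul_inv_norm he0
        refine ⟨‖e0‖⁻¹ • e0, ?_, Or.inr hnn⟩
        have heV' : ‖e0‖⁻¹ • e0 ∈ Vᗮ := Submodule.smul_mem _ _ he0V
        have hne0 : (‖e0‖⁻¹ • e0 : X) ≠ 0 := by
          intro h
          rw [h, norm_zero] at hnn
          norm_num at hnn
        refine (Submodule.eq_of_le_of_finrank_le
          ((Submodule.span_singleton_le_iff_mem _ _).2 heV') ?_).symm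
        rw [finrank_span_singleton hne0]
        exact hrk1
    have heO : e ∈ Vᗮ := heV ▸ Submodule.mem_span_singleton_self e
    have hpe : ∀ n, ⟪p n, e⟫ = 0 := fun n =>
      (Submodule.mem_orthogonal V e).1 heO (p n) (hpV n)
    set t : ℕ → ℝ := fun n => ⟪e, u n - z⟫ with ht
    have decomp : ∀ n, u n - z = p n + t n • e := by
      intro n
      obtain ⟨s0, hs0⟩ := Submodule.mem_span_singleton.1 (heV ▸ horthV n)
      have hdec : u n - z = p n + s0 • e := by
        rw [hs0]; abel
      rcases hee with h0 | h1
      · have hzero : u n - z = p n := by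
          rw [hdec, h0, smul_zero, add_zero]
        rw [hzero, ht]
        simp [h0]
      · have hts : t n = s0 := by
          rw [ht]
          simp only [hdec, inner_add_right, real_inner_smul_right]
          have hep : ⟪e, p n⟫ = 0 := by rw [real_inner_comm]; exact hpe n
          rw [hep, real_inner_self_eq_norm_sq, h1]
          ring
        rw [hts]
        exact hdec
    have hsqex : ∃ ssq : ℝ, Tendsto (fun n => t n ^ 2) atTop (𝓝 ssq) := by
      rcases hee with h0 | h1
      · refine ⟨0, ?_⟩
        have : ∀ n, t n = 0 := fun n => by rw [ht]; simp [h0]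
        simpa [this] using tendsto_const_nhds (α := ℝ) (f := atTop (α := ℕ))
      · refine ⟨l - ‖P‖ ^ 2, ?_⟩
        have hPn : Tendsto (fun n => ‖p n‖ ^ 2) atTop (𝓝 (‖P‖ ^ 2)) := (hP.norm).pow 2
        refine (hl.sub hPn).congr fun n => ?_
        rw [decomp n, norm_add_sq_real, real_inner_smul_right, hpe n, norm_smul, h1,
          Real.norm_eq_abs, mul_one, sq_abs]
        ring
    obtain ⟨ssq, hssq⟩ := hsqex
    have hdt : Tendsto (fun n => t (n + 1) - t n) atTop (𝓝 0) := by
      have hcont : Continuous fun y : X => ⟪e, y⟫ := continuous_const.inner continuous_id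
      have h1 := (hcont.tendsto 0).comp ddiff
      rw [inner_zero_right] at h1
      refine h1.congr fun n => ?_
      simp only [Function.comp_apply, ht]
      rw [← inner_sub_right]
      congr 1
      abel
    obtain ⟨τ, hτ⟩ := real_sq_tendsto_converges_aux t ssq hssq hdt
    refine ⟨P + τ • e + z, ?_⟩
    have hw : Tendsto (fun n => u n - z) atTop (𝓝 (P + τ • e)) :=
      (hP.add (hτ.smul_const e)).congr fun n => (decomp n).symm
    have := hw.add (tendsto_const_nhds (x := z))
    refine this.congr fun n => ?_
    abel
  refine ⟨key, fun x y => ?_⟩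
  obtain ⟨px, hpx⟩ := key x
  obtain ⟨py, hpy⟩ := key y
  refine ⟨px - py, (hpx.sub hpy).congr fun n => ?_⟩
  abel
end
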